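/- arXiv:2109.00588 — 6 statements merged into one kernel-verified Lean document; each statement's English description precedes it below -/
import Mathlib

section
/- Let W = ⟨S|M⟩ be a finite rank Coxeter system and let ψ : W → ℝ be conditionally of negative type and satisfy ψ(w) = ψ(w_1) + … + ψ(w_k) whenever w = w_1⋯w_k is a reduced expression. Then for all generators u, w ∈ S and all v ∈ W one has |γ_{u,w}^ψ(v)| = 2ψ(u)·𝟙(uv = vw) = 2ψ(w)·𝟙(uv = vw); in particular γ_{u,w}^ψ(v) ≠ 0 only if uv = vw, and if uv = vw then ψ(u) = ψ(w). -/
open CoxeterSystem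

/-- The function `γ_{u,w}^ψ(v) = ψ(uvw) + ψ(v) − ψ(uv) − ψ(vw)`. -/
def gammaFun {W : Type*} [Group W] (ψ : W → ℝ) (u w v : W) : ℝ :=
  ψ (u * v * w) + ψ v - ψ (u * v) - ψ (v * w)

/-- A function `ψ` on a group is conditionally of negative type if `ψ(e) = 0`,
`ψ(g) = ψ(g⁻¹)`, and `∑ᵢⱼ cᵢcⱼ ψ(gⱼ⁻¹gᵢ) ≤ 0` whenever `∑ᵢ cᵢ = 0`. -/
def IsCondNegType {G : Type*} [Group G] (ψ : G → ℝ) : Prop :=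
  ψ 1 = 0 ∧ (∀ g : G, ψ g⁻¹ = ψ g) ∧
    ∀ (m : ℕ) (g : Fin m → G) (c : Fin m → ℝ), (∑ i, c i) = 0 →
      ∑ i, ∑ j, c i * c j * ψ ((g j)⁻¹ * g i) ≤ 0

set_option linter.unusedSectionVars false
set_option maxHeartbeats 1600000

namespace CoxGammaAux

open List

variable {B : Type*} {M : CoxeterMatrix B} {W : Type*} [Group W] (cs : CoxeterSystem M W)

open Classical in
/-- `-1` if `t = x`, `1` otherwise. -/
noncomputable def ind {W : Type*} (t x : W) : ℤˣ := if t = x then -1 else 1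

lemma ind_of_ne {W : Type*} {t x : W} (h : t ≠ x) : ind t x = 1 := by
  classical
  rw [ind, if_neg h]

lemma ind_self {W : Type*} (t : W) : ind t t = -1 := by
  classical
  rw [ind, if_pos rfl]

/-- `(-1)` to the number of occurrences of `t` in `l`. -/
noncomputable def sgn (t : W) (l : List W) : ℤˣ := (l.map fun r => ind t r).prod

lemma sgn_nil (t : W) : sgn t ([] : List W) = 1 := rfl

lemma sgn_cons (t r : W) (l : List W) : sgn t (r :: l) = ind t r * sgn t l := by
  simp [sgn]

lemma sgn_append (t : W) (l₁ l₂ : List W) : sgn t (l₁ ++ l₂) = sgn t l₁ * sgn t l₂ := by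
  simp [sgn]

lemma sgn_singleton_self (t : W) : sgn t [t] = -1 := by
  simp [sgn, ind_self]

lemma sgn_of_not_mem {t : W} {l : List W} (h : t ∉ l) : sgn t l = 1 := by
  apply List.prod_eq_one
  intro x hx
  rcases List.mem_map.mp hx with ⟨r, hr, rfl⟩
  exact ind_of_ne (by rintro rfl; exact h hr)

lemma simple_conj_eq_iff (i : B) (t : W) :
    cs.simple i * t * cs.simple i = cs.simple i ↔ t = cs.simple i := by
  constructor
  · intro h
    have h1 : cs.simple i * (t * cs.simple i) = cs.simple i * 1 := by
      rw [← mul_assoc, h, mul_one]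
    have h2 : t * cs.simple i = 1 := mul_left_cancel h1
    have h3 : t = (cs.simple i)⁻¹ := eq_inv_of_mul_eq_one_left h2
    rwa [cs.inv_simple] at h3
  · rintro rfl
    rw [cs.simple_mul_simple_self, one_mul]

open Classical in
/-- The standard "reflection-sign" permutation associated with a generator. -/
noncomputable def sigma (i : B) : Equiv.Perm (W × ℤˣ) where
  toFun p := (cs.simple i * p.1 * cs.simple i, if p.1 = cs.simple i then -p.2 else p.2)
  invFun p := (cs.simple i * p.1 * cs.simple i, if p.1 = cs.simple i then -p.2 else p.2)
  left_inv p := by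
    obtain ⟨t, ε⟩ := p
    by_cases h : t = cs.simple i
    · subst h
      simp [cs.simple_mul_simple_self, mul_assoc, cs.simple_mul_simple_cancel_left]
    · have h2 : ¬ (cs.simple i * t * cs.simple i = cs.simple i) := by
        rw [simple_conj_eq_iff cs]; exact h
      simp only [if_neg h, if_neg h2]
      simp [mul_assoc, cs.simple_mul_simple_cancel_left, cs.simple_mul_simple_self]
  right_inv p := by
    obtain ⟨t, ε⟩ := p
    by_cases h : t = cs.simple i
    · subst h
      simp [cs.simple_mul_simple_self, mul_assoc, cs.simple_mul_simple_cancel_left]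
    · have h2 : ¬ (cs.simple i * t * cs.simple i = cs.simple i) := by
        rw [simple_conj_eq_iff cs]; exact h
      simp only [if_neg h, if_neg h2]
      simp [mul_assoc, cs.simple_mul_simple_cancel_left, cs.simple_mul_simple_self]

open Classical in
lemma sigma_apply (i : B) (t : W) (ε : ℤˣ) :
    sigma cs i (t, ε) = (cs.simple i * t * cs.simple i, if t = cs.simple i then -ε else ε) := rfl

lemma sigma_apply' (i : B) (t : W) (ε : ℤˣ) :
    sigma cs i (t, ε) = (cs.simple i * t * cs.simple i, ind t (cs.simple i) * ε) := by
  classical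
  rw [sigma_apply, ind]
  by_cases h : t = cs.simple i
  · rw [if_pos h, if_pos h, neg_one_mul]
  · rw [if_neg h, if_neg h, one_mul]

lemma pair_prod (g : ℕ → ℤˣ) (m : ℕ) :
    ∏ d ∈ Finset.range m, (g (2 * d) * g (2 * d + 1)) = ∏ n ∈ Finset.range (2 * m), g n := by
  induction m with
  | zero => simp
  | succ m ih =>
    rw [Finset.prod_range_succ, ih, show 2 * (m + 1) = 2 * m + 1 + 1 by ring,
      Finset.prod_range_succ, Finset.prod_range_succ, mul_assoc]

lemma sigma_pow_apply (i j : B) (k : ℕ) (t : W) (ε : ℤˣ) :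
    ((sigma cs i * sigma cs j) ^ k) (t, ε) =
      ((cs.simple i * cs.simple j) ^ k * t * ((cs.simple i * cs.simple j) ^ k)⁻¹,
        (∏ d ∈ Finset.range k,
          (ind t (cs.simple j * (cs.simple i * cs.simple j) ^ (2 * d)) *
           ind t (cs.simple j * (cs.simple i * cs.simple j) ^ (2 * d + 1)))) * ε) := by
  set q := cs.simple i * cs.simple j with hq
  have hconj : cs.simple j * q * cs.simple j = q⁻¹ := by
    rw [hq, mul_inv_rev, cs.inv_simple, cs.inv_simple]
    rw [mul_assoc, mul_assoc, cs.simple_mul_simple_self, mul_one]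
  have h1 : q⁻¹ * cs.simple j = cs.simple j * q := by
    rw [← hconj]
    simp [mul_assoc, cs.simple_mul_simple_self]
  have hshift : ∀ n : ℕ, q⁻¹ * (cs.simple j * q ^ n) * q = cs.simple j * q ^ (n + 2) := by
    intro n
    calc q⁻¹ * (cs.simple j * q ^ n) * q = q⁻¹ * cs.simple j * (q ^ n * q) := by group
      _ = cs.simple j * q * (q ^ n * q) := by rw [h1]
      _ = cs.simple j * q ^ (n + 2) := by
          rw [← pow_succ, mul_assoc, ← pow_succ']
  have hcond : ∀ (n : ℕ) (t : W),
      (q * t * q⁻¹ = cs.simple j * q ^ n) ↔ (t = cs.simple j * q ^ (n + 2)) := by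
    intro n t
    rw [← hshift n]
    constructor
    · intro h; rw [← h]; group
    · intro h; rw [h]; group
  have hind : ∀ (n : ℕ) (t : W),
      ind (q * t * q⁻¹) (cs.simple j * q ^ n) = ind t (cs.simple j * q ^ (n + 2)) := by
    intro n t
    classical
    unfold ind
    exact if_congr (hcond n t) rfl rfl
  induction k generalizing t ε with
  | zero => simp
  | succ k ih =>
    rw [pow_succ, Equiv.Perm.mul_apply]
    have hF : (sigma cs i * sigma cs j) (t, ε) =
        (q * t * q⁻¹,
          (ind t (cs.simple j * q ^ (2 * 0)) * ind t (cs.simple j * q ^ (2 * 0 + 1))) * ε) := by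
      rw [Equiv.Perm.mul_apply, sigma_apply', sigma_apply']
      have e1 : cs.simple i * (cs.simple j * t * cs.simple j) * cs.simple i = q * t * q⁻¹ := by
        rw [hq, mul_inv_rev, cs.inv_simple, cs.inv_simple]; group
      have e2 : ind (cs.simple j * t * cs.simple j) (cs.simple i)
          = ind t (cs.simple j * q ^ (2 * 0 + 1)) := by
        classical
        unfold ind
        refine if_congr ?_ rfl rfl
        constructor
        · intro h
          have ht : t = cs.simple j * cs.simple i * cs.simple j := by
            rw [← h]
            simp [mul_assoc, cs.simple_mul_simple_cancel_left, cs.simple_mul_simple_self]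
          rw [show (2*0+1 : ℕ) = 1 by norm_num, pow_one, ht, hq, mul_assoc]
        · intro h
          rw [show (2*0+1 : ℕ) = 1 by norm_num, pow_one, hq] at h
          rw [h]
          simp [mul_assoc, cs.simple_mul_simple_cancel_left, cs.simple_mul_simple_self]
      have e3 : ind t (cs.simple j) = ind t (cs.simple j * q ^ (2 * 0)) := by
        norm_num
      rw [e1, e2, ← e3]
      refine Prod.ext rfl ?_
      simp only
      rw [← mul_assoc, mul_comm (ind t (cs.simple j * q ^ (2 * 0 + 1))) (ind t (cs.simple j))]
    rw [hF, ih]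
    refine Prod.ext ?_ ?_
    · simp only
      group
    · simp only
      rw [Finset.prod_range_succ']
      have : (∏ d ∈ Finset.range k,
          (ind (q * t * q⁻¹) (cs.simple j * q ^ (2 * d)) *
           ind (q * t * q⁻¹) (cs.simple j * q ^ (2 * d + 1)))) =
          ∏ d ∈ Finset.range k,
          (ind t (cs.simple j * q ^ (2 * (d + 1))) *
           ind t (cs.simple j * q ^ (2 * (d + 1) + 1))) := by
        refine Finset.prod_congr rfl fun d _ => ?_
        rw [hind, hind, show 2 * d + 2 = 2 * (d + 1) by ring,
          show 2 * d + 1 + 2 = 2 * (d + 1) + 1 by ring]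
      rw [this]
      rw [← mul_assoc, ← mul_assoc]

lemma sigma_liftable : M.IsLiftable (fun i => sigma cs i) := by
  intro i j
  apply Equiv.ext
  rintro ⟨t, ε⟩
  simp only
  rw [sigma_pow_apply]
  have hM : (cs.simple i * cs.simple j) ^ M i j = 1 := cs.simple_mul_simple_pow i j
  rw [Equiv.Perm.one_apply]
  refine Prod.ext ?_ ?_
  · simp [hM]
  · simp only
    rw [pair_prod (fun n => ind t (cs.simple j * (cs.simple i * cs.simple j) ^ n)) (M i j)]
    rw [two_mul, Finset.prod_range_add]
    have hper : ∀ x : ℕ,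
        ind t (cs.simple j * (cs.simple i * cs.simple j) ^ (M i j + x)) =
        ind t (cs.simple j * (cs.simple i * cs.simple j) ^ x) := by
      intro x
      rw [pow_add, hM, one_mul]
    rw [Finset.prod_congr rfl fun x _ => hper x]
    rw [Int.units_mul_self, one_mul]

/-- The sign representation of the Coxeter group on `W × ℤˣ`. -/
noncomputable def rho : W →* Equiv.Perm (W × ℤˣ) :=
  cs.lift ⟨fun i => sigma cs i, sigma_liftable cs⟩

lemma rho_simple (i : B) : rho cs (cs.simple i) = sigma cs i :=
  cs.lift_apply_simple (sigma_liftable cs) i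

lemma rightInvSeq_cons (i : B) (ω : List B) :
    cs.rightInvSeq (i :: ω) =
      ((cs.wordProd ω)⁻¹ * cs.simple i * cs.wordProd ω) :: cs.rightInvSeq ω := rfl

lemma rho_wordProd (ω : List B) (t : W) (ε : ℤˣ) :
    rho cs (cs.wordProd ω) (t, ε) =
      (cs.wordProd ω * t * (cs.wordProd ω)⁻¹, sgn t (cs.rightInvSeq ω) * ε) := by
  induction ω generalizing t ε with
  | nil => simp [sgn_nil]
  | cons i ω ih =>
    rw [cs.wordProd_cons, map_mul, Equiv.Perm.mul_apply, ih, rho_simple, sigma_apply']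
    refine Prod.ext ?_ ?_
    · simp only
      rw [mul_inv_rev, cs.inv_simple]
      group
    · simp only
      rw [rightInvSeq_cons, sgn_cons, ← mul_assoc]
      congr 1
      congr 1
      have hiff : (cs.wordProd ω * t * (cs.wordProd ω)⁻¹ = cs.simple i) ↔
          (t = (cs.wordProd ω)⁻¹ * cs.simple i * cs.wordProd ω) := by
        constructor
        · intro h; rw [← h]; group
        · intro h; rw [h]; group
      classical
      unfold ind
      exact if_congr hiff rfl rfl

/-- Sign invariant: `-1` exactly when `t` is "inverted" by `x`. -/
noncomputable def eta (x t : W) : ℤˣ := (rho cs x (t, 1)).2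

lemma eta_wordProd (ω : List B) (t : W) :
    eta cs (cs.wordProd ω) t = sgn t (cs.rightInvSeq ω) := by
  rw [eta, rho_wordProd, mul_one]

lemma sgn_simple_eq_one {ω : List B} (hred : cs.IsReduced ω) {i : B}
    (h : cs.length (cs.wordProd ω * cs.simple i) = cs.length (cs.wordProd ω) + 1) :
    sgn (cs.simple i) (cs.rightInvSeq ω) = 1 := by
  apply sgn_of_not_mem
  intro hmem
  have := (cs.isRightInversion_of_mem_rightInvSeq hred hmem).2
  omega

lemma eta_eq_neg_one_of_descent {x : W} {i : B}
    (hx : cs.length (x * cs.simple i) + 1 = cs.length x) :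
    eta cs x (cs.simple i) = -1 := by
  obtain ⟨β, hβr, hβ⟩ := cs.exists_reduced_word' (x * cs.simple i)
  have hword : cs.wordProd (β.concat i) = x := by
    rw [cs.wordProd_concat, ← hβ, cs.simple_mul_simple_cancel_right]
  rw [← hword, eta_wordProd, cs.rightInvSeq_concat, List.concat_eq_append, sgn_append,
    sgn_singleton_self]
  have hnm : cs.simple i ∉ (List.map (MulAut.conj (cs.simple i)) (cs.rightInvSeq β)) := by
    intro hmem
    rcases List.mem_map.mp hmem with ⟨r, hr, hconj⟩
    have hrs : r = cs.simple i := by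
      have h5 : cs.simple i * r * (cs.simple i)⁻¹ = cs.simple i := hconj
      rw [cs.inv_simple] at h5
      exact (simple_conj_eq_iff cs i r).mp h5
    rw [hrs] at hr
    have h6 := (cs.isRightInversion_of_mem_rightInvSeq hβr hr).2
    rw [← hβ, cs.simple_mul_simple_cancel_right] at h6
    omega
  rw [sgn_of_not_mem hnm, one_mul]

/-- The key exchange-type lemma. -/
lemma exchange_main (u w : B) (v : W)
    (hsv : cs.length (cs.simple u * v) = cs.length v + 1)
    (hvt : cs.length (v * cs.simple w) = cs.length v + 1)
    (hm : cs.length (cs.simple u * v * cs.simple w) + 1 = cs.length (cs.simple u * v)) :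
    cs.simple u * v = v * cs.simple w := by
  obtain ⟨ω, hred, rfl⟩ := cs.exists_reduced_word' v
  have hredeq : cs.length (cs.wordProd ω) = ω.length := hred
  have h1 : eta cs (cs.simple u * cs.wordProd ω) (cs.simple w) = -1 :=
    eta_eq_neg_one_of_descent cs hm
  have h2 : eta cs (cs.simple u * cs.wordProd ω) (cs.simple w)
      = sgn (cs.simple w) (cs.rightInvSeq (u :: ω)) := by
    rw [← cs.wordProd_cons, eta_wordProd]
  rw [h2, rightInvSeq_cons, sgn_cons, sgn_simple_eq_one cs hred hvt, mul_one] at h1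
  by_cases hc : cs.simple w = (cs.wordProd ω)⁻¹ * cs.simple u * cs.wordProd ω
  · rw [hc]; group
  · rw [ind_of_ne hc] at h1
    exact absurd h1 (by decide)

end CoxGammaAux

section PsiLemmas

open CoxGammaAux List

variable {B : Type*} {M : CoxeterMatrix B} {W : Type*} [Group W] (cs : CoxeterSystem M W)
variable (ψ : W → ℝ)

lemma psi_nonneg (hneg : IsCondNegType ψ) (g : W) : 0 ≤ ψ g := by
  have h := hneg.2.2 2 ![1, g] ![1, -1] (by simp [Fin.sum_univ_two])
  simp [Fin.sum_univ_two, hneg.1, hneg.2.1] at h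
  linarith

variable (hadd : ∀ ω : List B, cs.IsReduced ω →
      ψ (cs.wordProd ω) = (ω.map fun i => ψ (cs.simple i)).sum)

include hadd

lemma psi_simple_mul {i : B} {v : W}
    (hl : cs.length (cs.simple i * v) = cs.length v + 1) :
    ψ (cs.simple i * v) = ψ (cs.simple i) + ψ v := by
  obtain ⟨ω, hred, rfl⟩ := cs.exists_reduced_word' v
  have hredeq : cs.length (cs.wordProd ω) = ω.length := hred
  have hr2 : cs.IsReduced (i :: ω) := by
    show cs.length (cs.wordProd (i :: ω)) = (i :: ω).length
    rw [cs.wordProd_cons, hl, hredeq, List.length_cons]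
  rw [← cs.wordProd_cons, hadd _ hr2, hadd _ hred, List.map_cons, List.sum_cons]

lemma psi_mul_simple {i : B} {v : W}
    (hl : cs.length (v * cs.simple i) = cs.length v + 1) :
    ψ (v * cs.simple i) = ψ v + ψ (cs.simple i) := by
  obtain ⟨ω, hred, rfl⟩ := cs.exists_reduced_word' v
  have hredeq : cs.length (cs.wordProd ω) = ω.length := hred
  have hr2 : cs.IsReduced (ω.concat i) := by
    show cs.length (cs.wordProd (ω.concat i)) = (ω.concat i).length
    rw [cs.wordProd_concat, hl, hredeq, List.length_concat]
  rw [← cs.wordProd_concat, hadd _ hr2, hadd _ hred, List.map_concat, List.sum_concat]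

lemma psi_simple_mul_desc {i : B} {v : W}
    (hl : cs.length (cs.simple i * v) + 1 = cs.length v) :
    ψ v = ψ (cs.simple i) + ψ (cs.simple i * v) := by
  have h1 : cs.length (cs.simple i * (cs.simple i * v)) = cs.length (cs.simple i * v) + 1 := by
    rw [cs.simple_mul_simple_cancel_left]
    omega
  have := psi_simple_mul cs ψ hadd h1
  rwa [cs.simple_mul_simple_cancel_left] at this

lemma psi_mul_simple_desc {i : B} {v : W}
    (hl : cs.length (v * cs.simple i) + 1 = cs.length v) :
    ψ v = ψ (v * cs.simple i) + ψ (cs.simple i) := by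
  have h1 : cs.length ((v * cs.simple i) * cs.simple i) = cs.length (v * cs.simple i) + 1 := by
    rw [cs.simple_mul_simple_cancel_right]
    omega
  have := psi_mul_simple cs ψ hadd h1
  rwa [cs.simple_mul_simple_cancel_right] at this

end PsiLemmas

open CoxGammaAux

open Classical in
/-- Let `W = ⟨S|M⟩` be a finite rank Coxeter system and `ψ : W → ℝ` conditionally of
negative type, additive on reduced expressions.  Then for all generators `u, w ∈ S` and all
`v ∈ W`, `|γ_{u,w}^ψ(v)| = 2ψ(u)·𝟙(uv = vw) = 2ψ(w)·𝟙(uv = vw)`; in particular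
`γ_{u,w}^ψ(v) ≠ 0` only if `uv = vw`, and if `uv = vw` then `ψ(u) = ψ(w)`. -/
theorem gammaFun_abs_eq_indicator
    {B : Type*} [Fintype B] {M : CoxeterMatrix B}
    {W : Type*} [Group W] (cs : CoxeterSystem M W)
    (ψ : W → ℝ) (hneg : IsCondNegType ψ)
    (hadd : ∀ ω : List B, cs.IsReduced ω →
      ψ (cs.wordProd ω) = (ω.map fun i => ψ (cs.simple i)).sum)
    (u w : B) (v : W) :
    (|gammaFun ψ (cs.simple u) (cs.simple w) v| =
        2 * ψ (cs.simple u) * (if cs.simple u * v = v * cs.simple w then 1 else 0)) ∧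
    (|gammaFun ψ (cs.simple u) (cs.simple w) v| =
        2 * ψ (cs.simple w) * (if cs.simple u * v = v * cs.simple w then 1 else 0)) ∧
    (gammaFun ψ (cs.simple u) (cs.simple w) v ≠ 0 → cs.simple u * v = v * cs.simple w) ∧
    (cs.simple u * v = v * cs.simple w → ψ (cs.simple u) = ψ (cs.simple w)) := by
  have hu0 : 0 ≤ ψ (cs.simple u) := psi_nonneg ψ hneg _
  by_cases h : cs.simple u * v = v * cs.simple w
  · -- the case `uv = vw`
    have hv3 : cs.simple u * v * cs.simple w = v := by
      rw [h, cs.simple_mul_simple_cancel_right]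
    have hψeq : ψ (cs.simple u * v) = ψ (v * cs.simple w) := congrArg ψ h
    rcases cs.length_simple_mul v u with hL | hL
    · -- ascent case
      have h1 : ψ (cs.simple u * v) = ψ (cs.simple u) + ψ v :=
        psi_simple_mul cs ψ hadd hL
      have hL2 : cs.length (v * cs.simple w) = cs.length v + 1 := by rw [← h]; exact hL
      have h2 : ψ (v * cs.simple w) = ψ v + ψ (cs.simple w) :=
        psi_mul_simple cs ψ hadd hL2
      have hst : ψ (cs.simple u) = ψ (cs.simple w) := by
        rw [h1, h2] at hψeq; linarith
      have hgam : gammaFun ψ (cs.simple u) (cs.simple w) v = -(2 * ψ (cs.simple u)) := by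
        rw [gammaFun, hv3]
        rw [h1, h2, hst]
        ring
      refine ⟨?_, ?_, fun _ => h, fun _ => hst⟩
      · rw [if_pos h, hgam, abs_neg, abs_of_nonneg (by linarith), mul_one]
      · rw [if_pos h, hgam, abs_neg, abs_of_nonneg (by linarith), mul_one, hst]
    · -- descent case
      have h1 : ψ v = ψ (cs.simple u) + ψ (cs.simple u * v) :=
        psi_simple_mul_desc cs ψ hadd hL
      have hL2 : cs.length (v * cs.simple w) + 1 = cs.length v := by rw [← h]; exact hL
      have h2 : ψ v = ψ (v * cs.simple w) + ψ (cs.simple w) :=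
        psi_mul_simple_desc cs ψ hadd hL2
      have hst : ψ (cs.simple u) = ψ (cs.simple w) := by
        rw [hψeq] at h1; linarith
      have hgam : gammaFun ψ (cs.simple u) (cs.simple w) v = 2 * ψ (cs.simple u) := by
        rw [gammaFun, hv3, hψeq]
        linarith
      refine ⟨?_, ?_, fun _ => h, fun _ => hst⟩
      · rw [if_pos h, hgam, abs_of_nonneg (by linarith), mul_one]
      · rw [if_pos h, hgam, abs_of_nonneg (by linarith), mul_one, hst]
  · -- the case `uv ≠ vw` : here `γ = 0`
    have hassoc : cs.simple u * (v * cs.simple w) = cs.simple u * v * cs.simple w :=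
      (mul_assoc _ _ _).symm
    have hgam : gammaFun ψ (cs.simple u) (cs.simple w) v = 0 := by
      rcases cs.length_simple_mul v u with hsv | hsv <;>
        rcases cs.length_mul_simple v w with hvt | hvt
      · -- both ascents
        rcases cs.length_mul_simple (cs.simple u * v) w with hm | hm
        · have h3 : ψ (cs.simple u * v * cs.simple w)
              = ψ (cs.simple u * v) + ψ (cs.simple w) :=
            psi_mul_simple cs ψ hadd hm
          have h1 : ψ (cs.simple u * v) = ψ (cs.simple u) + ψ v :=
            psi_simple_mul cs ψ hadd hsv
          have h2 : ψ (v * cs.simple w) = ψ v + ψ (cs.simple w) :=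
            psi_mul_simple cs ψ hadd hvt
          rw [gammaFun]; linarith
        · exact absurd (exchange_main cs u w v hsv hvt hm) h
      · -- ℓ(uv) = ℓ(v)+1, ℓ(vw)+1 = ℓ(v)
        rcases cs.length_simple_mul (v * cs.simple w) u with hm | hm <;>
          rw [hassoc] at hm
        · -- ℓ(uvw) = ℓ(vw)+1
          have h3 : ψ (cs.simple u * (v * cs.simple w))
              = ψ (cs.simple u) + ψ (v * cs.simple w) := by
            apply psi_simple_mul cs ψ hadd
            rw [hassoc]; exact hm
          rw [hassoc] at h3
          have h1 : ψ (cs.simple u * v) = ψ (cs.simple u) + ψ v :=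
            psi_simple_mul cs ψ hadd hsv
          rw [gammaFun]; linarith
        · -- contradiction by lengths
          rcases cs.length_mul_simple (cs.simple u * v) w with hm2 | hm2 <;> omega
      · -- ℓ(uv)+1 = ℓ(v), ℓ(vw) = ℓ(v)+1
        rcases cs.length_mul_simple (cs.simple u * v) w with hm | hm
        · -- ℓ(uvw) = ℓ(uv)+1
          have h3 : ψ (cs.simple u * v * cs.simple w)
              = ψ (cs.simple u * v) + ψ (cs.simple w) :=
            psi_mul_simple cs ψ hadd hm
          have h2 : ψ (v * cs.simple w) = ψ v + ψ (cs.simple w) :=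
            psi_mul_simple cs ψ hadd hvt
          rw [gammaFun]; linarith
        · -- contradiction by lengths
          rcases cs.length_simple_mul (v * cs.simple w) u with hm2 | hm2 <;>
            rw [hassoc] at hm2 <;> omega
      · -- both descents
        rcases cs.length_mul_simple (cs.simple u * v) w with hm | hm
        · -- middle case: exchange applied to v' = uv gives uv = vw, contradiction
          exfalso
          apply h
          have e1 : cs.length (cs.simple u * (cs.simple u * v))
              = cs.length (cs.simple u * v) + 1 := by
            rw [cs.simple_mul_simple_cancel_left]; omega
          have e3 : cs.length (cs.simple u * (cs.simple u * v) * cs.simple w) + 1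
              = cs.length (cs.simple u * (cs.simple u * v)) := by
            rw [cs.simple_mul_simple_cancel_left]
            omega
          have := exchange_main cs u w (cs.simple u * v) e1 hm e3
          rw [cs.simple_mul_simple_cancel_left] at this
          -- this : v = cs.simple u * v * cs.simple w
          calc cs.simple u * v = cs.simple u * (cs.simple u * v * cs.simple w) := by
                rw [← this]
            _ = v * cs.simple w := by
                rw [mul_assoc, cs.simple_mul_simple_cancel_left]
        · -- descent-descent
          have h3 : ψ (cs.simple u * v)
              = ψ (cs.simple u * v * cs.simple w) + ψ (cs.simple w) :=
            psi_mul_simple_desc cs ψ hadd hm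
          have h1 : ψ v = ψ (cs.simple u) + ψ (cs.simple u * v) :=
            psi_simple_mul_desc cs ψ hadd hsv
          have h2 : ψ v = ψ (v * cs.simple w) + ψ (cs.simple w) :=
            psi_mul_simple_desc cs ψ hadd hvt
          rw [gammaFun]; linarith
    refine ⟨?_, ?_, fun hg => absurd hgam hg, fun hc => absurd hc h⟩
    · rw [if_neg h, hgam, abs_zero, mul_zero]
    · rw [if_neg h, hgam, abs_zero, mul_zero]
end

section
/- Let W = ⟨S|M⟩ be a finite rank Coxeter system and let u, w ∈ S. Then γ_{u,w}^{ψ_S}(z) ≠ 0 if and only if z ∈ {v, uv, vw, uvw} for some v ∈ W satisfying |v| ≤ |uv|, |v| ≤ |vw| and uv = vw. -/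
open CoxeterSystem

/-!
For `ψ = ℓ`, `γ_{u,w}(z)` is the difference of the increments `ℓ(xw) - ℓ(x)` at `x = uz` and
`x = z`, so it is nonzero exactly when `w` is a right descent of one of `z`, `uz` but not of the
other; moreover `γ` changes sign under `z ↦ uz` and `z ↦ zw`, and `uvw = v` when `uv = vw`.

The heart of the matter: if `w` is not a right descent of `z` but is one of `uz`, then `uz = zw`.
Write `z` as a reduced word `ω`. By the exchange condition `s_w` occurs in the right inversion
sequence of `u :: ω`, which is `z⁻¹ s_u z` followed by that of `ω`; it cannot occur in the latter
since `w` is not a right descent of `z`, so `s_w = z⁻¹ s_u z`. The exchange condition is Tits'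
argument: the permutations `(x, ε) ↦ (s x s, ε + [x = s])` of `W × ZMod 2` satisfy the Coxeter
relations, so the parity of the number of occurrences of `t` in the right inversion sequence of a
word depends only on the element of `W` the word represents.
-/

section Gamma

variable {G : Type*} [Group G] (ψ : G → ℝ) {u w : G}

theorem gammaFun_mul_left (hu : u * u = 1) (v : G) :
    gammaFun ψ u w (u * v) = -gammaFun ψ u w v := by
  simp only [gammaFun, ← mul_assoc, hu, one_mul]
  ring

theorem gammaFun_mul_right (hw : w * w = 1) (v : G) :
    gammaFun ψ u w (v * w) = -gammaFun ψ u w v := by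
  simp only [gammaFun, mul_assoc, hw, mul_one]
  ring

end Gamma

open List

namespace CoxeterSystem

variable {B : Type*} {M : CoxeterMatrix B} {W : Type*} [Group W] (cs : CoxeterSystem M W)

local prefix:100 "s" => cs.simple
local prefix:100 "π" => cs.wordProd
local prefix:100 "ℓ" => cs.length
local prefix:100 "ris" => cs.rightInvSeq

theorem conj_simple_eq_simple_iff (i : B) (x : W) : MulAut.conj (s i) x = s i ↔ x = s i :=
  (MulAut.conj (s i)).injective.eq_iff' (by simp)

theorem simple_mul_pow_eq_pow_mul_simple (i j : B) (n : ℕ) :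
    s j * (s i * s j) ^ n = (s j * s i) ^ n * s j :=
  (SemiconjBy.pow_right (by simp [SemiconjBy, mul_assoc]) n).eq

theorem wordProd_flatten_replicate (i j : B) (n : ℕ) :
    π (replicate n [i, j]).flatten = (s i * s j) ^ n := by
  induction n with
  | zero => simp
  | succ n ih => simp [replicate_succ, wordProd_cons, ih, pow_succ', mul_assoc]

theorem rightInvSeq_flatten_replicate (i j : B) (n : ℕ) :
    ris (replicate n [i, j]).flatten =
      (range (2 * n)).reverse.map (fun c => (s j * s i) ^ c * s j) := by
  induction n with
  | zero => simp
  | succ n ih =>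
    have hinv : (π (replicate n [i, j]).flatten)⁻¹ = (s j * s i) ^ n := by
      rw [wordProd_flatten_replicate, ← inv_pow, mul_inv_rev, inv_simple, inv_simple]
    have hsecond : (π (replicate n [i, j]).flatten)⁻¹ * s j * π (replicate n [i, j]).flatten =
        (s j * s i) ^ (2 * n) * s j := by
      rw [hinv, wordProd_flatten_replicate, mul_assoc, simple_mul_pow_eq_pow_mul_simple, ← mul_assoc,
        ← pow_add, two_mul]
    have hfirst : (π (j :: (replicate n [i, j]).flatten))⁻¹ * s i *
        π (j :: (replicate n [i, j]).flatten) = (s j * s i) ^ (2 * n + 1) * s j := by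
      rw [wordProd_cons, mul_inv_rev, inv_simple, hinv, wordProd_flatten_replicate,
        simple_mul_pow_eq_pow_mul_simple, show 2 * n + 1 = n + 1 + n by ring, pow_add, pow_succ]
      simp only [mul_assoc]
    rw [replicate_succ, flatten_cons, cons_append, cons_append, nil_append, rightInvSeq,
      rightInvSeq, ih, hfirst, hsecond, show 2 * (n + 1) = 2 * n + 1 + 1 by ring, range_succ,
      range_succ]
    simp

section ReflSignPerm

variable [DecidableEq W]

theorem even_count_rightInvSeq_flatten_replicate (i j : B) (x : W) :
    Even ((ris (replicate (M i j) [i, j]).flatten).count x) := by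
  have hperiodic : ((fun c => (s j * s i) ^ c * s j) ∘ fun c => M i j + c) =
      fun c => (s j * s i) ^ c * s j := by
    funext c
    simp [pow_add]
  rw [rightInvSeq_flatten_replicate, map_reverse, count_reverse, two_mul, range_add, map_append,
    map_map, hperiodic, count_append]
  exact ⟨_, rfl⟩

/-- Tits' permutation of `T × {±1}` attached to `s i`, with the set of reflections `T` enlarged to
`W` and `{±1}` written additively as `ZMod 2`. -/
def reflSignPerm (i : B) : Equiv.Perm (W × ZMod 2) :=
  Function.Involutive.toPerm
    (fun p => (MulAut.conj (s i) p.1, p.2 + if p.1 = s i then 1 else 0))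
    (by
      rintro ⟨x, a⟩
      simp only [conj_simple_eq_simple_iff, ← MulAut.mul_apply, ← map_mul,
        simple_mul_simple_self, map_one, MulAut.one_apply, add_assoc]
      split_ifs <;> simp [CharTwo.add_self_eq_zero])

theorem reflSignPerm_apply (i : B) (x : W) (a : ZMod 2) :
    cs.reflSignPerm i (x, a) = (MulAut.conj (s i) x, a + if x = s i then 1 else 0) :=
  rfl

theorem prod_map_reflSignPerm_apply (ω : List B) (x : W) (a : ZMod 2) :
    (ω.map cs.reflSignPerm).prod (x, a) = (MulAut.conj (π ω) x, a + (ris ω).count x) := by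
  induction ω with
  | nil => simp
  | cons i ω ih =>
    have hhead : MulAut.conj (π ω) x = s i ↔ (π ω)⁻¹ * s i * π ω = x := by
      rw [MulAut.conj_apply]
      constructor <;> intro h <;> rw [← h] <;> group
    simp only [map_cons, prod_cons, Equiv.Perm.mul_apply, ih, reflSignPerm_apply, wordProd_cons,
      map_mul, MulAut.mul_apply, rightInvSeq, count_cons, beq_iff_eq, hhead]
    split_ifs <;> push_cast <;> ring_nf

theorem isLiftable_reflSignPerm : M.IsLiftable cs.reflSignPerm := by
  intro i j
  have hword : (cs.reflSignPerm i * cs.reflSignPerm j) ^ M i j =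
      ((replicate (M i j) [i, j]).flatten.map cs.reflSignPerm).prod := by
    simp [map_flatten, prod_flatten, map_replicate]
  ext ⟨x, a⟩ : 1
  rw [hword, prod_map_reflSignPerm_apply, wordProd_flatten_replicate, simple_mul_simple_pow,
    ZMod.natCast_eq_zero_iff_even.mpr (even_count_rightInvSeq_flatten_replicate cs i j x)]
  simp

theorem prod_map_reflSignPerm_eq_lift (ω : List B) :
    (ω.map cs.reflSignPerm).prod = cs.lift ⟨_, cs.isLiftable_reflSignPerm⟩ (π ω) := by
  simp [wordProd, map_list_prod, map_map, Function.comp_def]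

theorem count_rightInvSeq_eq_of_wordProd_eq {ω ω' : List B} (h : π ω = π ω') (t : W) :
    ((ris ω).count t : ZMod 2) = (ris ω').count t := by
  have hperm : (ω.map cs.reflSignPerm).prod = (ω'.map cs.reflSignPerm).prod := by
    rw [prod_map_reflSignPerm_eq_lift, prod_map_reflSignPerm_eq_lift, h]
  simpa [prod_map_reflSignPerm_apply] using congrArg (fun σ => (σ (t, 0)).2) hperm

end ReflSignPerm

theorem simple_mem_rightInvSeq_of_isRightDescent {ω : List B} {i : B}
    (h : cs.IsRightDescent (π ω) i) : s i ∈ ris ω := by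
  classical
  obtain ⟨τ, hτ, hτω⟩ := cs.exists_isReduced (π ω * s i)
  have hnotmem : s i ∉ ris τ := fun hmem => by
    have hinv := (cs.isRightInversion_of_mem_rightInvSeq hτ hmem).2
    rw [← hτω, simple_mul_simple_cancel_right] at hinv
    exact lt_asymm h hinv
  have hword : π ω = π (τ.concat i) := by
    rw [wordProd_concat, ← hτω, simple_mul_simple_cancel_right]
  have hconj : s i ∉ (ris τ).map (MulAut.conj (s i)) := by
    rw [mem_map]
    rintro ⟨t, ht, hts⟩
    rw [conj_simple_eq_simple_iff] at hts
    exact hnotmem (hts ▸ ht)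
  have hodd : ((ris (τ.concat i)).count (s i) : ZMod 2) = 1 := by
    rw [rightInvSeq_concat, concat_eq_append, count_append, count_singleton_self,
      count_eq_zero.mpr hconj]
    simp
  rw [← count_pos_iff, Nat.pos_iff_ne_zero]
  intro hzero
  have hparity := cs.count_rightInvSeq_eq_of_wordProd_eq hword (s i)
  rw [hzero, hodd] at hparity
  exact zero_ne_one hparity

theorem simple_mul_eq_mul_simple_of_isRightDescent {z : W} {u w : B}
    (hz : ¬cs.IsRightDescent z w) (huz : cs.IsRightDescent (s u * z) w) :
    s u * z = z * s w := by
  obtain ⟨ω, hω, rfl⟩ := cs.exists_isReduced z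
  have hmem : s w ∈ ris (u :: ω) :=
    cs.simple_mem_rightInvSeq_of_isRightDescent (by rwa [wordProd_cons])
  rcases mem_cons.mp hmem with hhead | htail
  · rw [hhead]
    group
  · exact absurd (cs.isRightInversion_of_mem_rightInvSeq hω htail).2 hz

theorem gammaFun_length_ne_zero_iff (u w : B) (z : W) :
    gammaFun (fun g => (ℓ g : ℝ)) (s u) (s w) z ≠ 0 ↔
      (cs.IsRightDescent (s u * z) w ↔ ¬cs.IsRightDescent z w) := by
  have hgamma : gammaFun (fun g => (ℓ g : ℝ)) (s u) (s w) z =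
      ((ℓ (s u * z * s w) + ℓ z : ℕ) : ℝ) - ((ℓ (s u * z) + ℓ (z * s w) : ℕ) : ℝ) := by
    push_cast [gammaFun]
    ring
  rw [hgamma, sub_ne_zero, Ne, Nat.cast_inj]
  have hz := cs.length_mul_simple z w
  have huz := cs.length_mul_simple (s u * z) w
  simp only [IsRightDescent]
  omega

end CoxeterSystem

theorem gammaFun_wordLength_ne_zero_iff_general
    {B : Type*} {M : CoxeterMatrix B}
    {W : Type*} [Group W] (cs : CoxeterSystem M W)
    (u w : B) (z : W) :
    gammaFun (fun g => (cs.length g : ℝ)) (cs.simple u) (cs.simple w) z ≠ 0 ↔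
      ∃ v : W,
        cs.length v ≤ cs.length (cs.simple u * v) ∧
        cs.length v ≤ cs.length (v * cs.simple w) ∧
        cs.simple u * v = v * cs.simple w ∧
        (z = v ∨ z = cs.simple u * v ∨ z = v * cs.simple w ∨
          z = cs.simple u * v * cs.simple w) := by
  have hlength : ∀ v, ¬cs.IsRightDescent v w → cs.simple u * v = v * cs.simple w →
      cs.length v ≤ cs.length (cs.simple u * v) ∧ cs.length v ≤ cs.length (v * cs.simple w) := by
    intro v hv huv
    rw [huv, cs.not_isRightDescent_iff.mp hv]
    omega
  constructor
  · intro hz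
    rw [cs.gammaFun_length_ne_zero_iff] at hz
    by_cases hzw : cs.IsRightDescent z w
    · have hv : ¬cs.IsRightDescent (cs.simple u * z) w := fun h => hz.mp h hzw
      have huv := cs.simple_mul_eq_mul_simple_of_isRightDescent hv
        (by rwa [simple_mul_simple_cancel_left])
      obtain ⟨hleft, hright⟩ := hlength _ hv huv
      exact ⟨_, hleft, hright, huv, Or.inr (Or.inl (cs.simple_mul_simple_cancel_left u).symm)⟩
    · have huz := cs.simple_mul_eq_mul_simple_of_isRightDescent hzw (hz.mpr hzw)
      obtain ⟨hleft, hright⟩ := hlength z hzw huz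
      exact ⟨z, hleft, hright, huz, Or.inl rfl⟩
  · rintro ⟨v, -, -, huv, hz⟩
    have hv : gammaFun (fun g => (cs.length g : ℝ)) (cs.simple u) (cs.simple w) v ≠ 0 := by
      rw [cs.gammaFun_length_ne_zero_iff, huv]
      exact (cs.isRightDescent_iff_not_isRightDescent_mul.not.trans not_not).symm
    rcases hz with rfl | rfl | rfl | rfl
    · exact hv
    · rwa [gammaFun_mul_left _ (cs.simple_mul_simple_self u), neg_ne_zero]
    · rwa [gammaFun_mul_right _ (cs.simple_mul_simple_self w), neg_ne_zero]
    · rwa [huv, simple_mul_simple_cancel_right]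

/-- Let `W = ⟨S|M⟩` be a finite rank Coxeter system and `u, w ∈ S`. Then
`γ_{u,w}^{ψ_S}(z) ≠ 0` if and only if `z ∈ {v, uv, vw, uvw}` for some `v ∈ W` satisfying
`|v| ≤ |uv|`, `|v| ≤ |vw|` and `uv = vw`, where `ψ_S` is the word length. -/
theorem gammaFun_wordLength_ne_zero_iff
    {B : Type*} [Fintype B] {M : CoxeterMatrix B}
    {W : Type*} [Group W] (cs : CoxeterSystem M W)
    (u w : B) (z : W) :
    gammaFun (fun g => (cs.length g : ℝ)) (cs.simple u) (cs.simple w) z ≠ 0 ↔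
      ∃ v : W,
        cs.length v ≤ cs.length (cs.simple u * v) ∧
        cs.length v ≤ cs.length (v * cs.simple w) ∧
        cs.simple u * v = v * cs.simple w ∧
        (z = v ∨ z = cs.simple u * v ∨ z = v * cs.simple w ∨
          z = cs.simple u * v * cs.simple w) :=
  gammaFun_wordLength_ne_zero_iff_general cs u w z
end

section
/- Let W = ⟨S|M⟩ be a finite rank Coxeter system and let x = (x_1,…,x_n) ∈ [0,∞)^n satisfy x_i = x_j whenever C_i = C_j. Then the weighted word length ψ_x : W → [0,∞) is conditionally of negative type: ψ_x(e) = 0, ψ_x(w) = ψ_x(w⁻¹) for all w ∈ W, and for all g_1,…,g_m ∈ W and real numbers c_1,…,c_m with Σ_i c_i = 0 one has Σ_{i,j=1}^m c_i c_j ψ_x(g_j⁻¹ g_i) ≤ 0. -/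
open CoxeterSystem

/-- The graph `Graph'_S(W)` on the generators, with an edge `{s_i, s_j}` whenever
`3 ≤ m_{i,j} < ∞` (in the `CoxeterMatrix` encoding `0` stands for `∞`, so this is
`3 ≤ M i j`). -/
def finGraph {B : Type*} (M : CoxeterMatrix B) : SimpleGraph B where
  Adj x y := x ≠ y ∧ 3 ≤ M x y
  symm := by
    constructor
    intro x y h
    exact ⟨h.1.symm, M.symmetric x y ▸ h.2⟩
  loopless := by
    constructor
    intro x h
    exact h.1 rfl

/-!
Counting modulo 2 the letters from each component of `Graph'_S(W)` is a homomorphism on `W`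
(a relation `(s_i s_j)^{m_ij}` with `m_ij` odd involves a single component), so conjugate
generators lie in one component and `x` extends to a conjugation-invariant weight `μ ≥ 0`.
With `N(w)` the left inversion set of `w`, `ψ_x(w) = ∑_{t ∈ N(w)} μ(t)`, and Bourbaki's sign
action of `W` on `W × {±1}` gives the cocycle identity `N(b⁻¹a) = b⁻¹ (N(a) ∆ N(b)) b`. Hence
`ψ_x(g_j⁻¹g_i) = ∑_t μ(t) (χ_i(t) - χ_j(t))²` with `χ_k` the indicator of `N(g_k)`, and
`∑ c_i c_j (χ_i - χ_j)² = -2 (∑ c_i χ_i)²` when `∑ c_i = 0`.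
-/

theorem Finset.sum_sum_mul_mul_sub_sq_of_sum_eq_zero {ι : Type*} [Fintype ι] (c a : ι → ℝ)
    (hc : ∑ i, c i = 0) :
    ∑ i, ∑ j, c i * c j * (a i - a j) ^ 2 = -2 * (∑ i, c i * a i) ^ 2 := by
  have expand : ∀ i j, c i * c j * (a i - a j) ^ 2 =
      c j * (c i * a i ^ 2) + c i * (c j * a j ^ 2) - 2 * ((c i * a i) * (c j * a j)) :=
    fun i j => by ring
  simp_rw [expand]
  simp only [Finset.sum_add_distrib, Finset.sum_sub_distrib, ← Finset.mul_sum, ← Finset.sum_mul, hc]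
  ring

theorem Finset.sum_sum_mul_mul_sum_symmDiff_nonpos {ι X : Type*} [Fintype ι] [DecidableEq X]
    (A : ι → Finset X) (μ : X → ℝ) (hμ : ∀ t, 0 ≤ μ t) (c : ι → ℝ) (hc : ∑ i, c i = 0) :
    ∑ i, ∑ j, c i * c j * ∑ t ∈ symmDiff (A i) (A j), μ t ≤ 0 := by
  set U := Finset.univ.biUnion A
  set χ : ι → X → ℝ := fun i t => if t ∈ A i then 1 else 0
  have sum_symmDiff : ∀ i j, ∑ t ∈ symmDiff (A i) (A j), μ t =
      ∑ t ∈ U, μ t * (χ i t - χ j t) ^ 2 := by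
    intro i j
    have hsub : symmDiff (A i) (A j) ⊆ U := by
      intro t ht
      simp only [U, Finset.mem_biUnion, Finset.mem_univ, true_and]
      rcases Finset.mem_symmDiff.mp ht with h | h
      exacts [⟨i, h.1⟩, ⟨j, h.1⟩]
    rw [← Finset.inter_eq_right.mpr hsub, ← Finset.sum_ite_mem]
    refine Finset.sum_congr rfl fun t _ => ?_
    by_cases hi : t ∈ A i <;> by_cases hj : t ∈ A j <;> simp [χ, Finset.mem_symmDiff, hi, hj]
  calc ∑ i, ∑ j, c i * c j * ∑ t ∈ symmDiff (A i) (A j), μ t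
      = ∑ t ∈ U, μ t * ∑ i, ∑ j, c i * c j * (χ i t - χ j t) ^ 2 := by
        simp only [sum_symmDiff, Finset.mul_sum]
        conv_rhs => rw [Finset.sum_comm]
        refine Finset.sum_congr rfl fun i _ => ?_
        conv_rhs => rw [Finset.sum_comm]
        exact Finset.sum_congr rfl fun j _ => Finset.sum_congr rfl fun t _ => by ring
    _ = ∑ t ∈ U, -2 * μ t * (∑ i, c i * χ i t) ^ 2 := by
        simp only [Finset.sum_sum_mul_mul_sub_sq_of_sum_eq_zero c _ hc]
        exact Finset.sum_congr rfl fun t _ => by ring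
    _ ≤ 0 := Finset.sum_nonpos fun t _ => by nlinarith [hμ t, sq_nonneg (∑ i, c i * χ i t)]

theorem List.sum_map_eq_sum_mul_count {ι R : Type*} [Fintype ι] [DecidableEq ι] [NonAssocSemiring R]
    (f : ι → R) (l : List ι) : (l.map f).sum = ∑ i, f i * (l.count i : R) := by
  rw [Finset.sum_list_map_count, Finset.sum_subset (Finset.subset_univ _)]
  · simp only [nsmul_eq_mul']
  · intro i _ hi
    simp [List.count_eq_zero_of_not_mem (List.mem_toFinset.not.mp hi)]

section SignConj

open scoped Classical

variable {G : Type*} [Group G]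

/-- The sign twist from Bourbaki's proof of the exchange condition. -/
noncomputable def signConj (s : G) : Equiv.Perm (G × ℤˣ) where
  toFun p := (s * p.1 * s⁻¹, if p.1 = s then -p.2 else p.2)
  invFun p := (s⁻¹ * p.1 * s, if p.1 = s then -p.2 else p.2)
  left_inv := by
    rintro ⟨t, ε⟩
    have : s * t * s⁻¹ = s ↔ t = s := by rw [mul_inv_eq_iff_eq_mul, mul_right_inj]
    simp only [this]
    split_ifs <;> simp [mul_assoc]
  right_inv := by
    rintro ⟨t, ε⟩
    have : s⁻¹ * t * s = s ↔ t = s := by rw [mul_assoc, inv_mul_eq_iff_eq_mul, mul_left_inj]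
    simp only [this]
    split_ifs <;> simp [mul_assoc]

theorem signConj_apply (s t : G) (ε : ℤˣ) :
    signConj s (t, ε) = (s * t * s⁻¹, if t = s then -ε else ε) := rfl

variable {a b : G}

theorem mul_mul_pow_eq_mul_pow_mul (n : ℕ) : b * (a * b) ^ n = (b * a) ^ n * b :=
  (SemiconjBy.pow_right (mul_assoc b a b).symm n).eq

theorem inv_mul_pow_conj_self (ha : a⁻¹ = a) (hb : b⁻¹ = b) (n : ℕ) :
    ((a * b) ^ n)⁻¹ * b * (a * b) ^ n = (b * a) ^ (2 * n) * b := by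
  rw [← inv_pow, mul_inv_rev, ha, hb, mul_assoc, mul_mul_pow_eq_mul_pow_mul, ← mul_assoc, ← pow_add,
    two_mul]

theorem inv_mul_pow_conj_conj (ha : a⁻¹ = a) (hb : b⁻¹ = b) (n : ℕ) :
    ((a * b) ^ n)⁻¹ * (b⁻¹ * a * b) * (a * b) ^ n = (b * a) ^ (2 * n + 1) * b := by
  rw [← inv_pow, mul_inv_rev, ha, hb]
  calc (b * a) ^ n * (b * a * b) * (a * b) ^ n = (b * a) ^ n * (b * a) * (b * (a * b) ^ n) := by
        simp only [mul_assoc]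
    _ = (b * a) ^ (2 * n + 1) * b := by
        rw [mul_mul_pow_eq_mul_pow_mul, ← pow_succ, ← mul_assoc, ← pow_add]
        ring_nf

theorem signConj_mul_signConj_pow_apply (ha : a⁻¹ = a) (hb : b⁻¹ = b) (n : ℕ) (t : G) (ε : ℤˣ) :
    ((signConj a * signConj b) ^ n) (t, ε) =
      ((a * b) ^ n * t * ((a * b) ^ n)⁻¹,
        (∏ e ∈ Finset.range (2 * n), if (b * a) ^ e * b = t then -1 else 1) * ε) := by
  induction n with
  | zero => simp
  | succ n ih =>
    have conj_eq : ∀ g y : G, g * t * g⁻¹ = y ↔ t = g⁻¹ * y * g := fun g y => by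
      constructor <;> rintro rfl <;> group
    have flip_b : (a * b) ^ n * t * ((a * b) ^ n)⁻¹ = b ↔ t = (b * a) ^ (2 * n) * b := by
      rw [conj_eq, inv_mul_pow_conj_self ha hb]
    have flip_a : b * ((a * b) ^ n * t * ((a * b) ^ n)⁻¹) * b⁻¹ = a ↔
        t = (b * a) ^ (2 * n + 1) * b := by
      rw [show b * ((a * b) ^ n * t * ((a * b) ^ n)⁻¹) * b⁻¹
          = (b * (a * b) ^ n) * t * (b * (a * b) ^ n)⁻¹ by group, conj_eq,
        ← inv_mul_pow_conj_conj ha hb]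
      group
    rw [pow_succ', Equiv.Perm.mul_apply, ih, Equiv.Perm.mul_apply, signConj_apply, signConj_apply,
      show 2 * (n + 1) = 2 * n + 1 + 1 by ring, Finset.prod_range_succ, Finset.prod_range_succ,
      flip_b, flip_a]
    refine Prod.ext (by simp only [pow_succ', mul_inv_rev, mul_assoc]) ?_
    simp only [eq_comm (a := t)]
    split_ifs <;> simp

theorem signConj_mul_signConj_pow_eq_one (ha : a⁻¹ = a) (hb : b⁻¹ = b) {m : ℕ}
    (hm : (a * b) ^ m = 1) : (signConj a * signConj b) ^ m = 1 := by
  have periodic : ∀ e, (b * a) ^ (m + e) = (b * a) ^ e := fun e => by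
    rw [pow_add, ← ha, ← hb, ← mul_inv_rev, inv_pow, hm, inv_one, one_mul]
  ext1 ⟨t, ε⟩
  rw [signConj_mul_signConj_pow_apply ha hb, two_mul, Finset.prod_range_add]
  simp [periodic, Int.units_mul_self, hm]

end SignConj

namespace CoxeterSystem

open scoped Classical

variable {B W : Type*} [Group W] {M : CoxeterMatrix B} (cs : CoxeterSystem M W)

theorem isLiftable_signConj_simple : M.IsLiftable fun i => signConj (cs.simple i) := fun i j =>
  signConj_mul_signConj_pow_eq_one (cs.inv_simple i) (cs.inv_simple j)
    (cs.simple_mul_simple_pow i j)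

noncomputable def signAction : W →* Equiv.Perm (W × ℤˣ) :=
  cs.lift ⟨_, cs.isLiftable_signConj_simple⟩

/-- `reflSign w t = -1` exactly when `t` is a right inversion of `w`. -/
noncomputable def reflSign (w t : W) : ℤˣ := (cs.signAction w (t, 1)).2

theorem signAction_apply (w t : W) (ε : ℤˣ) :
    cs.signAction w (t, ε) = (w * t * w⁻¹, cs.reflSign w t * ε) := by
  suffices h : ∃ f : W → ℤˣ, ∀ t ε, cs.signAction w (t, ε) = (w * t * w⁻¹, f t * ε) by
    obtain ⟨f, hf⟩ := h
    rw [reflSign, hf, hf, mul_one]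
  induction w using cs.simple_induction_left with
  | one => exact ⟨1, fun t ε => by simp⟩
  | mul_simple_left w i ih =>
    obtain ⟨f, hf⟩ := ih
    refine ⟨fun t => (if w * t * w⁻¹ = cs.simple i then -1 else 1) * f t, fun t ε => ?_⟩
    rw [map_mul, Equiv.Perm.mul_apply, hf, signAction, cs.lift_apply_simple, signConj_apply]
    refine Prod.ext (by group) ?_
    split_ifs with h <;> simp [h]

theorem reflSign_mul (u v t : W) :
    cs.reflSign (u * v) t = cs.reflSign u (v * t * v⁻¹) * cs.reflSign v t := by
  rw [reflSign, map_mul, Equiv.Perm.mul_apply, signAction_apply, signAction_apply, mul_one]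

@[simp] theorem reflSign_one (t : W) : cs.reflSign 1 t = 1 := by
  simp [reflSign]

theorem reflSign_simple (i : B) (t : W) :
    cs.reflSign (cs.simple i) t = if t = cs.simple i then -1 else 1 := by
  rw [reflSign, signAction, cs.lift_apply_simple, signConj_apply]

theorem reflSign_inv (w t : W) : cs.reflSign w⁻¹ t = cs.reflSign w (w⁻¹ * t * w) := by
  have h := cs.reflSign_mul w w⁻¹ t
  rw [mul_inv_cancel, reflSign_one, inv_inv, eq_comm, mul_eq_one_iff_eq_inv,
    Int.units_inv_eq_self] at h
  exact h.symm

theorem reflSign_inv_wordProd_eq_neg_one_iff {ω : List B} (hω : (cs.leftInvSeq ω).Nodup)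
    (t : W) : cs.reflSign (cs.wordProd ω)⁻¹ t = -1 ↔ t ∈ cs.leftInvSeq ω := by
  induction ω generalizing t with
  | nil => simp
  | cons i ω ih =>
    rw [leftInvSeq, List.nodup_cons] at hω
    have ih := ih (hω.2.of_map _)
    have mem_map_conj : ∀ y, y ∈ (cs.leftInvSeq ω).map (MulAut.conj (cs.simple i)) ↔
        cs.simple i * y * cs.simple i ∈ cs.leftInvSeq ω := fun y => by
      simp only [List.mem_map, MulAut.conj_apply, cs.inv_simple]
      constructor
      · rintro ⟨z, hz, rfl⟩
        simpa [mul_assoc] using hz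
      · exact fun h => ⟨_, h, by simp [mul_assoc]⟩
    rw [wordProd_cons, mul_inv_rev, cs.inv_simple, reflSign_mul, reflSign_simple, cs.inv_simple,
      leftInvSeq, List.mem_cons, mem_map_conj, ← ih]
    by_cases ht : t = cs.simple i
    · subst ht
      have : cs.reflSign (cs.wordProd ω)⁻¹ (cs.simple i) = 1 :=
        (Int.units_eq_one_or _).resolve_right fun h =>
          hω.1 ((mem_map_conj _).mpr ((ih _).mp (by simpa [mul_assoc] using h)))
      simp [this]
    · simp [ht]

noncomputable def leftInvSet (w : W) : Finset W :=
  (cs.leftInvSeq (cs.exists_isReduced w).choose).toFinset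

theorem mem_leftInvSet (w t : W) : t ∈ cs.leftInvSet w ↔ cs.reflSign w⁻¹ t = -1 := by
  obtain ⟨hred, hw⟩ := (cs.exists_isReduced w).choose_spec
  rw [leftInvSet, List.mem_toFinset, ← reflSign_inv_wordProd_eq_neg_one_iff _ hred.nodup_leftInvSeq,
    ← hw]

theorem leftInvSet_wordProd {ω : List B} (hω : cs.IsReduced ω) :
    cs.leftInvSet (cs.wordProd ω) = (cs.leftInvSeq ω).toFinset := by
  ext t
  rw [mem_leftInvSet, List.mem_toFinset, reflSign_inv_wordProd_eq_neg_one_iff _ hω.nodup_leftInvSeq]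

theorem conj_mem_leftInvSet_inv_mul_iff (a b t : W) :
    b⁻¹ * t * b ∈ cs.leftInvSet (b⁻¹ * a) ↔ t ∈ symmDiff (cs.leftInvSet a) (cs.leftInvSet b) := by
  rw [Finset.mem_symmDiff, mem_leftInvSet, mem_leftInvSet, mem_leftInvSet, mul_inv_rev, inv_inv,
    reflSign_mul, ← reflSign_inv, show b * (b⁻¹ * t * b) * b⁻¹ = t by group]
  rcases Int.units_eq_one_or (cs.reflSign a⁻¹ t) with ha | ha <;>
    rcases Int.units_eq_one_or (cs.reflSign b⁻¹ t) with hb | hb <;> simp [ha, hb]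

theorem sum_leftInvSet_inv_mul {f : W → ℝ} (hf : ∀ g t, f (g * t * g⁻¹) = f t) (a b : W) :
    ∑ t ∈ cs.leftInvSet (b⁻¹ * a), f t =
      ∑ t ∈ symmDiff (cs.leftInvSet a) (cs.leftInvSet b), f t := by
  symm
  refine Finset.sum_equiv (MulAut.conj b⁻¹).toEquiv (fun t => ?_) (fun t _ => ?_)
  · simp [conj_mem_leftInvSet_inv_mul_iff]
  · simpa using (hf b⁻¹ t).symm

theorem isLiftable_single_connectedComponentMk :
    M.IsLiftable fun i =>
      Multiplicative.ofAdd (Finsupp.single ((finGraph M).connectedComponentMk i) (1 : ZMod 2)) := by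
  intro i j
  have two_eq_zero : ∀ v : (finGraph M).ConnectedComponent →₀ ZMod 2, v + v = 0 := fun v => by
    ext; simp [CharTwo.add_self_eq_zero]
  rw [← ofAdd_add, ← ofAdd_nsmul, ofAdd_eq_one]
  rcases Nat.even_or_odd (M i j) with ⟨k, hk⟩ | hodd
  · rw [hk, add_nsmul, ← nsmul_add, two_eq_zero, nsmul_zero]
  · suffices (finGraph M).connectedComponentMk i = (finGraph M).connectedComponentMk j by
      rw [this, two_eq_zero, nsmul_zero]
    by_cases hij : i = j
    · rw [hij]
    · refine SimpleGraph.ConnectedComponent.connectedComponentMk_eq_of_adj ⟨hij, ?_⟩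
      have := M.off_diagonal i j hij
      obtain ⟨k, hk⟩ := hodd
      omega

noncomputable def componentParity :
    W →* Multiplicative ((finGraph M).ConnectedComponent →₀ ZMod 2) :=
  cs.lift ⟨_, isLiftable_single_connectedComponentMk⟩

noncomputable def reflWeight (x : B → ℝ) (t : W) : ℝ :=
  if h : ∃ i, cs.componentParity t = cs.componentParity (cs.simple i) then x h.choose else 0

theorem reflWeight_conj (x : B → ℝ) (g t : W) :
    cs.reflWeight x (g * t * g⁻¹) = cs.reflWeight x t := by
  simp only [reflWeight, map_mul, map_inv, mul_inv_cancel_comm]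

theorem reflWeight_nonneg {x : B → ℝ} (hx : ∀ i, 0 ≤ x i) (t : W) : 0 ≤ cs.reflWeight x t := by
  unfold reflWeight
  split_ifs
  exacts [hx _, le_rfl]

theorem reflWeight_simple {x : B → ℝ} (hx : ∀ i j, (finGraph M).Reachable i j → x i = x j) (i : B) :
    cs.reflWeight x (cs.simple i) = x i := by
  have eq_of_parity : ∀ j, cs.componentParity (cs.simple i) = cs.componentParity (cs.simple j) →
      x j = x i := fun j h => by
    simp only [componentParity, lift_apply_simple, EmbeddingLike.apply_eq_iff_eq,
      Finsupp.single_left_inj one_ne_zero] at h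
    exact (hx _ _ (SimpleGraph.ConnectedComponent.exact h)).symm
  have hex : ∃ j, cs.componentParity (cs.simple i) = cs.componentParity (cs.simple j) := ⟨i, rfl⟩
  rw [reflWeight, dif_pos hex]
  exact eq_of_parity _ hex.choose_spec

theorem sum_map_reflWeight_leftInvSeq {x : B → ℝ}
    (hx : ∀ i j, (finGraph M).Reachable i j → x i = x j) (ω : List B) :
    ((cs.leftInvSeq ω).map (cs.reflWeight x)).sum = (ω.map x).sum := by
  induction ω with
  | nil => rfl
  | cons i ω ih =>
    have conj_invariant : cs.reflWeight x ∘ MulAut.conj (cs.simple i) = cs.reflWeight x :=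
      funext (cs.reflWeight_conj x (cs.simple i))
    rw [leftInvSeq, List.map_cons, List.map_map, conj_invariant, List.sum_cons, ih,
      reflWeight_simple cs hx, List.map_cons, List.sum_cons]

theorem sum_reflWeight_leftInvSet_wordProd {x : B → ℝ}
    (hx : ∀ i j, (finGraph M).Reachable i j → x i = x j) {ω : List B} (hω : cs.IsReduced ω) :
    ∑ t ∈ cs.leftInvSet (cs.wordProd ω), cs.reflWeight x t = (ω.map x).sum := by
  rw [leftInvSet_wordProd cs hω, List.sum_toFinset _ hω.nodup_leftInvSeq,
    sum_map_reflWeight_leftInvSeq cs hx]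

end CoxeterSystem

/-- Let `W = ⟨S|M⟩` be a finite rank Coxeter system and let the weights `x_i ≥ 0` satisfy
`x_i = x_j` whenever `s_i` and `s_j` lie in the same connected component of `Graph'_S(W)`.
Then the weighted word length `ψ_x` (defined on reduced expressions by
`ψ_x(w) = Σ_i x_i·#{l : w_l = s_i}`) is conditionally of negative type: `ψ_x(e) = 0`,
`ψ_x(w) = ψ_x(w⁻¹)`, and `Σ_{i,j} c_i c_j ψ_x(g_j⁻¹ g_i) ≤ 0` whenever `Σ_i c_i = 0`. -/
theorem weighted_length_isCondNegType
    {B : Type*} [Fintype B] [DecidableEq B] {M : CoxeterMatrix B}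
    {W : Type*} [Group W] (cs : CoxeterSystem M W)
    (x : B → ℝ) (hx : ∀ i : B, 0 ≤ x i)
    (hcomp : ∀ i j : B, (finGraph M).Reachable i j → x i = x j)
    (ψ : W → ℝ)
    (hψ : ∀ ω : List B, cs.IsReduced ω →
      ψ (cs.wordProd ω) = ∑ i : B, x i * (ω.count i : ℝ)) :
    IsCondNegType ψ := by
  classical
  have hψ_eq : ∀ w, ψ w = ∑ t ∈ cs.leftInvSet w, cs.reflWeight x t := fun w => by
    obtain ⟨ω, hω, rfl⟩ := cs.exists_isReduced w
    rw [hψ ω hω, cs.sum_reflWeight_leftInvSet_wordProd hcomp hω, List.sum_map_eq_sum_mul_count]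
  refine ⟨by simpa using hψ [] (by simp [CoxeterSystem.IsReduced]), fun w => ?_, fun m g c hc => ?_⟩
  · obtain ⟨ω, hω, rfl⟩ := cs.exists_isReduced w
    simp only [← wordProd_reverse, hψ _ hω.reverse, hψ _ hω, List.count_reverse]
  · simp only [hψ_eq, cs.sum_leftInvSet_inv_mul (cs.reflWeight_conj x)]
    exact Finset.sum_sum_mul_mul_sum_symmDiff_nonpos _ _ (cs.reflWeight_nonneg hx) c hc
end

section
/- Let W = ⟨S|M⟩ be a finite rank Coxeter system and let n = (n_1,…,n_{|S|}) ∈ ℕ^{|S|} with n_i ≥ 1 and n_i = n_j whenever C_i = C_j. Define a new Coxeter system W̃_n = ⟨S_n | M_n⟩ with generating set S_n = {s_{i,k} : 1 ≤ i ≤ |S|, 1 ≤ k ≤ n_i} and, for distinct generators, labels m_{s_{i,k},s_{j,l}} = m_{i,j} if C_i = C_j and k = l, m_{s_{i,k},s_{j,l}} = 2 if C_i = C_j and k ≠ l, and m_{s_{i,k},s_{j,l}} = m_{i,j} if C_i ≠ C_j. Then the assignment s_i ↦ s_{i,1}s_{i,2}⋯s_{i,n_i} extends to an injective group homomorphism φ_n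 : W → W̃_n which maps reduced expressions to reduced expressions; moreover, denoting by ψ̃_n the word length of W̃_n, for every w ∈ W with reduced expression w = w_1⋯w_k one has ψ̃_n(φ_n(w)) = Σ_{i=1}^{|S|} n_i·|{l : w_l = s_i}|. -/
/-!
The blocks `φ(s_i) = s_{i,1} ⋯ s_{i,n_i}` satisfy the Coxeter relations of `W`: within a
component of `Graph'_S(W)` distinct levels commute, so `(φ(s_i) φ(s_j))^{m_{ij}}` is the product
over the levels `k` of `(s_{i,k} s_{j,k})^{m_{ij}} = 1`, and between components the labels are
`2` or `∞`. For every `κ`, sending `s_{i,k}` to `s_i` if `k = min κ (n_i - 1)` and to `1`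
otherwise also respects the relations and is a retraction of `φ`; hence `φ` is injective.

For reduced `ω`, the right inversion sequence of the expanded word has one block
`φ(v)⁻¹ s_{i,k} φ(v)` (`k < n_i`) for each entry `v⁻¹ s_i v` of the right inversion sequence
of `ω`. The level-`k` retraction sends `φ(v)⁻¹ s_{i,k} φ(v)` to `v⁻¹ s_i v` and every entry to
`1` or to an entry for `ω`, so distinctness of the entries for `ω` lifts to the expanded word.
A word whose right inversion sequence has no repetition is reduced, because the sign-count
representation of `W` on `W × {±1}` shows that the parity of the number of occurrences of a
reflection depends only on the element represented.
-/

open CoxeterSystem Classical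

/-- The expansion of a word in the generators `S` of `W` into a word in the generators
`S_n = {s_{i,k} : 1 ≤ k ≤ n_i}` of the doubled system, replacing each letter `s_i` by
`s_{i,1} s_{i,2} ⋯ s_{i,n_i}`. -/
def expandWord {B : Type*} (n : B → ℕ) (ω : List B) : List ((i : B) × Fin (n i)) :=
  ω.flatMap fun i => List.ofFn fun k : Fin (n i) => (⟨i, k⟩ : (i : B) × Fin (n i))

theorem mul_mul_inv_eq_iff_eq_inv_mul_mul {G : Type*} [Group G] {x t y : G} :
    x * t * x⁻¹ = y ↔ t = x⁻¹ * y * x := by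
  constructor <;> rintro rfl <;> group

namespace List

variable {G : Type*} [Monoid G]

theorem prod_ofFn_mul_prod_ofFn {N : ℕ} (a b : Fin N → G)
    (hab : ∀ k l, k ≠ l → Commute (a k) (b l)) :
    (ofFn a).prod * (ofFn b).prod = (ofFn fun k => a k * b k).prod := by
  induction N with
  | zero => simp
  | succ N ih =>
    have hcomm : Commute (ofFn fun k => a k.succ).prod (b 0) :=
      Commute.list_prod_left _ _ fun x hx => by
        obtain ⟨k, rfl⟩ := mem_ofFn.mp hx
        exact hab _ _ (Fin.succ_ne_zero k)
    rw [ofFn_succ, ofFn_succ, ofFn_succ, prod_cons, prod_cons, prod_cons, mul_assoc,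
      ← mul_assoc _ (b 0), hcomm.eq, mul_assoc, ← mul_assoc (a 0),
      ih _ _ fun k l hkl => hab _ _ (Fin.succ_injective _ |>.ne hkl)]

theorem prod_ofFn_pow {N : ℕ} (c : Fin N → G) (hc : ∀ k l, k ≠ l → Commute (c k) (c l))
    (m : ℕ) : (ofFn c).prod ^ m = (ofFn fun k => c k ^ m).prod := by
  induction N with
  | zero => simp
  | succ N ih =>
    have hcomm : Commute (c 0) (ofFn fun k => c k.succ).prod :=
      Commute.list_prod_right _ _ fun x hx => by
        obtain ⟨k, rfl⟩ := mem_ofFn.mp hx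
        exact hc _ _ (Fin.succ_ne_zero k).symm
    rw [ofFn_succ, ofFn_succ, prod_cons, prod_cons, hcomm.mul_pow,
      ih _ fun k l hkl => hc _ _ (Fin.succ_injective _ |>.ne hkl)]

theorem prod_ofFn_eq_of_forall_ne {N : ℕ} (f : Fin N → G) (c : Fin N)
    (hf : ∀ k, k ≠ c → f k = 1) : (ofFn f).prod = f c := by
  induction N with
  | zero => exact c.elim0
  | succ N ih =>
    rw [ofFn_succ, prod_cons]
    cases c using Fin.cases with
    | zero =>
      rw [prod_eq_one fun x hx => ?_, mul_one]
      obtain ⟨k, rfl⟩ := mem_ofFn.mp hx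
      exact hf _ (Fin.succ_ne_zero k)
    | succ c =>
      rw [hf 0 (Fin.succ_ne_zero c).symm, one_mul,
        ih _ c fun k hk => hf _ (Fin.succ_injective _ |>.ne hk)]

end List

open List

namespace CoxeterSystem

variable {B : Type*} {M : CoxeterMatrix B} {W : Type*} [Group W] (cs : CoxeterSystem M W)

local prefix:100 "s" => cs.simple
local prefix:100 "π" => cs.wordProd
local prefix:100 "ris" => cs.rightInvSeq

theorem simple_ne_one (i : B) : s i ≠ 1 := fun h => by
  simpa [h] using cs.length_simple i

theorem commute_simple_of_eq_two {i j : B} (h : M i j = 2) : Commute (s i) (s j) := by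
  have := cs.simple_mul_simple_pow i j
  rw [h, pow_two, mul_eq_one_iff_eq_inv, mul_inv_rev, inv_simple, inv_simple] at this
  exact this

theorem ite_simple_mul_ite_simple_pow {i j : B} {P Q : Prop} [Decidable P] [Decidable Q] {m : ℕ}
    (hPQ : P → Q → M i j ∣ m) (hP : P → ¬Q → Even m) (hQ : ¬P → Q → Even m) :
    ((if P then s i else 1) * (if Q then s j else 1)) ^ m = 1 := by
  have hsq (i : B) (hm : Even m) : s i ^ m = 1 := by
    obtain ⟨c, rfl⟩ := hm
    rw [← two_mul, pow_mul, simple_sq, one_pow]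
  split_ifs with hp hq hq
  · obtain ⟨c, rfl⟩ := hPQ hp hq
    rw [pow_mul, simple_mul_simple_pow, one_pow]
  · rw [mul_one, hsq i (hP hp hq)]
  · rw [one_mul, hsq j (hQ hp hq)]
  · simp

theorem lift_wordProd {G : Type*} [Monoid G] {f : B → G} (hf : M.IsLiftable f) (ω : List B) :
    cs.lift ⟨f, hf⟩ (π ω) = (ω.map f).prod := by
  rw [wordProd, map_list_prod, map_map]
  exact congrArg _ (map_congr_left fun i _ => cs.lift_apply_simple hf i)

theorem prod_map_alternatingWord_two_mul {G : Type*} [Monoid G] (f : B → G) (i j : B) (m : ℕ) :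
    ((alternatingWord i j (2 * m)).map f).prod = (f i * f j) ^ m := by
  induction m with
  | zero => simp [alternatingWord]
  | succ m ih =>
    rw [mul_add_one, alternatingWord_succ', alternatingWord_succ', if_neg (by simp),
      if_pos (by simp), map_cons, map_cons, prod_cons, prod_cons, ih, pow_succ', mul_assoc]

theorem rightInvSeq_cons (i : B) (ω : List B) :
    ris (i :: ω) = ((π ω)⁻¹ * s i * π ω) :: ris ω := rfl

theorem rightInvSeq_append (ω ω' : List B) :
    ris (ω ++ ω') = (ris ω).map (fun t => (π ω')⁻¹ * t * π ω') ++ ris ω' := by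
  induction ω with
  | nil => simp
  | cons i ω ih =>
    rw [cons_append, rightInvSeq_cons, rightInvSeq_cons, ih, wordProd_append, map_cons,
      cons_append, mul_inv_rev]
    group

theorem rightInvSeq_eq_map_simple {ω : List B} (h : ∀ i ∈ ω, ∀ j ∈ ω, Commute (s i) (s j)) :
    ris ω = ω.map cs.simple := by
  induction ω with
  | nil => rfl
  | cons i ω ih =>
    have hi : Commute (s i) (π ω) := Commute.list_prod_right _ _ fun _ hx => by
      obtain ⟨j, hj, rfl⟩ := mem_map.mp hx
      exact h i mem_cons_self j (mem_cons_of_mem _ hj)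
    rw [rightInvSeq_cons, map_cons, mul_assoc, hi.eq, inv_mul_cancel_left,
      ih fun j hj k hk => h j (mem_cons_of_mem _ hj) k (mem_cons_of_mem _ hk)]

theorem rightInvSeq_alternatingWord (i j : B) (e : ℕ) :
    ris (alternatingWord i j e) = ((range e).map fun k => s j * (s i * s j) ^ k).reverse := by
  induction e generalizing i j with
  | zero => rfl
  | succ e ih =>
    have hconj (k : ℕ) : s j * (s i * (s j * s i) ^ k) * s j = s j * (s i * s j) ^ (k + 1) := by
      have : SemiconjBy (s i) (s j * s i) (s i * s j) := by simp [SemiconjBy, mul_assoc]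
      rw [(this.pow_right k).eq, pow_succ]
      simp only [mul_assoc]
    rw [alternatingWord_succ, rightInvSeq_concat, ih, range_succ_eq_map]
    simp [map_reverse, hconj]

theorem even_count_rightInvSeq_alternatingWord (i j : B) (t : W) :
    Even ((ris (alternatingWord i j (2 * M i j))).count t) := by
  have hperiod (k : ℕ) : s j * (s i * s j) ^ (M i j + k) = s j * (s i * s j) ^ k := by
    rw [pow_add, cs.simple_mul_simple_pow, one_mul]
  rw [rightInvSeq_alternatingWord, count_reverse, two_mul, range_add, map_append, count_append,
    map_map]
  simp only [Function.comp_def, hperiod]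
  exact ⟨_, rfl⟩

/-- The action of `s i` in the sign-count representation of `W` on `W × {±1}`, the standard
route to the exchange condition. -/
noncomputable def reflectionPerm (i : B) : Equiv.Perm (W × ℤˣ) :=
  Function.Involutive.toPerm (fun p => (s i * p.1 * s i, if p.1 = s i then -p.2 else p.2)) <| by
    rintro ⟨t, ε⟩
    have hconj : s i * t * s i = s i ↔ t = s i := by
      simpa [cs.inv_simple, cs.simple_mul_simple_self] using
        mul_mul_inv_eq_iff_eq_inv_mul_mul (x := s i) (t := t) (y := s i)
    simp only [hconj]
    split_ifs <;> simp [mul_assoc, simple_mul_simple_cancel_left]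

theorem reflectionPerm_apply (i : B) (t : W) (ε : ℤˣ) :
    cs.reflectionPerm i (t, ε) = (s i * t * s i, if t = s i then -ε else ε) := rfl

theorem prod_map_reflectionPerm_apply (ω : List B) (t : W) (ε : ℤˣ) :
    (ω.map cs.reflectionPerm).prod (t, ε) =
      (π ω * t * (π ω)⁻¹, (-1) ^ (ris ω).count t * ε) := by
  induction ω generalizing t ε with
  | nil => simp
  | cons i ω ih =>
    rw [map_cons, prod_cons, Equiv.Perm.mul_apply, ih, rightInvSeq_cons, count_cons,
      reflectionPerm_apply, mul_mul_inv_eq_iff_eq_inv_mul_mul, wordProd_cons]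
    refine Prod.ext (by simp only [mul_inv_rev, inv_simple, mul_assoc]) ?_
    by_cases h : t = (π ω)⁻¹ * s i * π ω
    · simp [h, pow_succ]
    · simp [h, Ne.symm h]

theorem isLiftable_reflectionPerm : M.IsLiftable cs.reflectionPerm := by
  intro i j
  rw [← prod_map_alternatingWord_two_mul]
  ext ⟨t, ε⟩ : 1
  rw [prod_map_reflectionPerm_apply, (even_count_rightInvSeq_alternatingWord cs i j t).neg_one_pow,
    wordProd, prod_map_alternatingWord_two_mul, cs.simple_mul_simple_pow]
  simp

theorem neg_one_pow_count_rightInvSeq_eq {ω ω' : List B} (h : π ω = π ω') (t : W) :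
    (-1 : ℤˣ) ^ (ris ω).count t = (-1) ^ (ris ω').count t := by
  have key (ω : List B) : (cs.lift ⟨_, cs.isLiftable_reflectionPerm⟩ (π ω) (t, 1)).2 =
      (-1) ^ (ris ω).count t := by
    rw [lift_wordProd, prod_map_reflectionPerm_apply, mul_one]
  rw [← key, ← key, h]

theorem isReduced_of_nodup_rightInvSeq {ω : List B} (h : (ris ω).Nodup) : cs.IsReduced ω := by
  obtain ⟨ρ, hρ, hρω⟩ := cs.exists_isReduced (π ω)
  have hsub : ris ω ⊆ ris ρ := fun t ht => by
    have := cs.neg_one_pow_count_rightInvSeq_eq hρω t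
    rw [count_eq_one_of_mem h ht, pow_one] at this
    by_contra hnot
    rw [count_eq_zero_of_not_mem hnot, pow_zero] at this
    exact absurd this (by decide)
  have hlen := (h.subperm hsub).length_le
  rw [length_rightInvSeq, length_rightInvSeq, ← hρ.eq, ← hρω] at hlen
  exact le_antisymm (cs.length_wordProd_le ω) hlen

end CoxeterSystem

namespace CoxeterMatrix

variable {B : Type*} (M : CoxeterMatrix B)

/-- The index `⟨i, k⟩` of `Mn` stands for the generator `s_{i,k+1}` of `W̃_n`. -/
structure IsDoubling (n : B → ℕ) (Mn : CoxeterMatrix ((i : B) × Fin (n i))) : Prop where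
  eq_of_reachable : ∀ i j : B, (finGraph M).Reachable i j → n i = n j
  apply_of_reachable_of_ne {i j : B} : (finGraph M).Reachable i j →
    ∀ (k : Fin (n i)) (l : Fin (n j)), (⟨i, k⟩ : (i : B) × Fin (n i)) ≠ ⟨j, l⟩ →
      Mn ⟨i, k⟩ ⟨j, l⟩ = if (k : ℕ) = l then M i j else 2
  apply_of_not_reachable {i j : B} : ¬(finGraph M).Reachable i j →
    ∀ (k : Fin (n i)) (l : Fin (n j)), Mn ⟨i, k⟩ ⟨j, l⟩ = M i j

variable {M}

theorem eq_zero_or_eq_two_of_not_reachable {i j : B} (h : ¬(finGraph M).Reachable i j) :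
    M i j = 0 ∨ M i j = 2 := by
  have hij : i ≠ j := fun hij => h (hij ▸ .refl i)
  have := M.off_diagonal i j hij
  have : ¬3 ≤ M i j := fun h3 => h (SimpleGraph.Adj.reachable ⟨hij, h3⟩)
  omega

namespace IsDoubling

variable {n : B → ℕ} {Mn : CoxeterMatrix ((i : B) × Fin (n i))}

theorem of_forall_ne [DecidableRel (finGraph M).Reachable]
    (hcomp : ∀ i j : B, (finGraph M).Reachable i j → n i = n j)
    (hMn : ∀ p q : (i : B) × Fin (n i), p ≠ q →
      Mn p q =
        if (finGraph M).Reachable p.1 q.1 then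
          (if (p.2 : ℕ) = (q.2 : ℕ) then M p.1 q.1 else 2)
        else M p.1 q.1) :
    M.IsDoubling n Mn where
  eq_of_reachable := hcomp
  apply_of_reachable_of_ne h k l hkl := (hMn _ _ hkl).trans (if_pos h)
  apply_of_not_reachable h k l :=
    (hMn _ _ fun hp => h (by cases hp; exact .refl _)).trans (if_neg h)

theorem apply_of_reachable (hMn : M.IsDoubling n Mn) {i j : B} (h : (finGraph M).Reachable i j)
    (k : Fin (n i)) (l : Fin (n j)) : Mn ⟨i, k⟩ ⟨j, l⟩ = if (k : ℕ) = l then M i j else 2 := by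
  by_cases hp : (⟨i, k⟩ : (i : B) × Fin (n i)) = ⟨j, l⟩
  · cases hp
    simp
  · exact hMn.apply_of_reachable_of_ne h k l hp

end IsDoubling

end CoxeterMatrix

def expandLetter {B : Type*} (n : B → ℕ) (i : B) : List ((i : B) × Fin (n i)) :=
  ofFn fun k : Fin (n i) => (⟨i, k⟩ : (i : B) × Fin (n i))

theorem expandWord_cons {B : Type*} (n : B → ℕ) (i : B) (ω : List B) :
    expandWord n (i :: ω) = expandLetter n i ++ expandWord n ω :=
  flatMap_cons

theorem length_expandWord {B : Type*} [Fintype B] [DecidableEq B] (n : B → ℕ) (ω : List B) :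
    (expandWord n ω).length = ∑ i : B, n i * ω.count i := by
  calc (expandWord n ω).length = ∑ i ∈ ω.toFinset, n i * ω.count i := by
        simp [expandWord, length_flatMap, Finset.sum_list_map_count, mul_comm]
    _ = ∑ i : B, n i * ω.count i := Finset.sum_subset (Finset.subset_univ _) fun i _ hi => by
        simp [count_eq_zero_of_not_mem (by simpa using hi)]

namespace CoxeterSystem

variable {B : Type*} {M : CoxeterMatrix B} {W : Type*} [Group W] (cs : CoxeterSystem M W)
  {n : B → ℕ} {Mn : CoxeterMatrix ((i : B) × Fin (n i))} {Wn : Type*} [Group Wn]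
  (csn : CoxeterSystem Mn Wn)

local prefix:100 "s" => cs.simple
local prefix:100 "π" => cs.wordProd
local prefix:100 "ris" => cs.rightInvSeq

theorem wordProd_expandLetter (i : B) :
    csn.wordProd (expandLetter n i) = (ofFn fun k => csn.simple ⟨i, k⟩).prod := by
  rw [wordProd, expandLetter, map_ofFn]
  rfl

variable {csn}

theorem commute_simple_of_reachable (hMn : M.IsDoubling n Mn) {i j : B}
    (h : (finGraph M).Reachable i j) {k : Fin (n i)} {l : Fin (n j)} (hkl : (k : ℕ) ≠ l) :
    Commute (csn.simple ⟨i, k⟩) (csn.simple ⟨j, l⟩) :=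
  csn.commute_simple_of_eq_two ((hMn.apply_of_reachable h k l).trans (if_neg hkl))

theorem wordProd_expandLetter_mul_pow_of_reachable (hMn : M.IsDoubling n Mn) {i j : B}
    (h : (finGraph M).Reachable i j) :
    (csn.wordProd (expandLetter n i) * csn.wordProd (expandLetter n j)) ^ M i j = 1 := by
  have hN := hMn.eq_of_reachable i j h
  have hj : csn.wordProd (expandLetter n j) =
      (ofFn fun k : Fin (n i) => csn.simple ⟨j, Fin.cast hN k⟩).prod := by
    rw [wordProd_expandLetter, ofFn_congr hN.symm]
  have hab (k l : Fin (n i)) (hkl : k ≠ l) :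
      Commute (csn.simple ⟨i, k⟩) (csn.simple ⟨j, Fin.cast hN l⟩) :=
    commute_simple_of_reachable hMn h (Fin.val_ne_of_ne hkl)
  have haa (k l : Fin (n i)) (hkl : k ≠ l) : Commute (csn.simple ⟨i, k⟩) (csn.simple ⟨i, l⟩) :=
    commute_simple_of_reachable hMn (.refl i) (Fin.val_ne_of_ne hkl)
  have hbb (k l : Fin (n i)) (hkl : k ≠ l) :
      Commute (csn.simple ⟨j, Fin.cast hN k⟩) (csn.simple ⟨j, Fin.cast hN l⟩) :=
    commute_simple_of_reachable hMn (.refl j) (show (k : ℕ) ≠ l from Fin.val_ne_of_ne hkl)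
  rw [wordProd_expandLetter, hj, prod_ofFn_mul_prod_ofFn _ _ hab, prod_ofFn_pow _
    fun k l hkl => ((haa k l hkl).mul_right (hab k l hkl)).mul_left
      ((hab l k hkl.symm).symm.mul_right (hbb k l hkl))]
  refine prod_eq_one fun x hx => ?_
  obtain ⟨k, rfl⟩ := mem_ofFn.mp hx
  simpa [hMn.apply_of_reachable h] using csn.simple_mul_simple_pow ⟨i, k⟩ ⟨j, Fin.cast hN k⟩

theorem isLiftable_wordProd_expandLetter (hMn : M.IsDoubling n Mn) :
    M.IsLiftable fun i => csn.wordProd (expandLetter n i) := by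
  intro i j
  by_cases h : (finGraph M).Reachable i j
  · exact wordProd_expandLetter_mul_pow_of_reachable hMn h
  have hsq (i : B) : csn.wordProd (expandLetter n i) ^ 2 = 1 := by
    simpa [sq] using wordProd_expandLetter_mul_pow_of_reachable hMn (.refl i)
  rcases CoxeterMatrix.eq_zero_or_eq_two_of_not_reachable h with h0 | h2
  · rw [h0, pow_zero]
  have hcomm : Commute (csn.wordProd (expandLetter n i)) (csn.wordProd (expandLetter n j)) := by
    rw [wordProd_expandLetter, wordProd_expandLetter]
    refine Commute.list_prod_left _ _ fun x hx => Commute.list_prod_right _ _ fun y hy => ?_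
    obtain ⟨k, rfl⟩ := mem_ofFn.mp hx
    obtain ⟨l, rfl⟩ := mem_ofFn.mp hy
    exact csn.commute_simple_of_eq_two ((hMn.apply_of_not_reachable h k l).trans h2)
  rw [h2, hcomm.mul_pow, hsq, hsq, one_mul]

variable (csn)

noncomputable def expandHom (hMn : M.IsDoubling n Mn) : W →* Wn :=
  cs.lift ⟨fun i => csn.wordProd (expandLetter n i), isLiftable_wordProd_expandLetter hMn⟩

theorem expandHom_simple (hMn : M.IsDoubling n Mn) (i : B) :
    cs.expandHom csn hMn (s i) = csn.wordProd (expandLetter n i) :=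
  cs.lift_apply_simple (isLiftable_wordProd_expandLetter hMn) i

theorem expandHom_wordProd (hMn : M.IsDoubling n Mn) (ω : List B) :
    cs.expandHom csn hMn (π ω) = csn.wordProd (expandWord n ω) := by
  induction ω with
  | nil => simp [expandWord]
  | cons i ω ih =>
    rw [wordProd_cons, map_mul, ih, expandHom_simple, expandWord_cons, wordProd_append]

theorem isLiftable_levelRetraction (hMn : M.IsDoubling n Mn) (κ : ℕ) :
    Mn.IsLiftable fun p => if (p.2 : ℕ) = min κ (n p.1 - 1) then s p.1 else 1 := by
  rintro ⟨i, k⟩ ⟨j, l⟩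
  dsimp only
  by_cases h : (finGraph M).Reachable i j
  · have hN := hMn.eq_of_reachable i j h
    rw [hMn.apply_of_reachable h]
    refine cs.ite_simple_mul_ite_simple_pow (fun hk hl => ?_) (fun hk hl => ?_) (fun hk hl => ?_)
    · rw [if_pos (by omega)]
    · rw [if_neg (by omega)]; exact even_two
    · rw [if_neg (by omega)]; exact even_two
  · rw [hMn.apply_of_not_reachable h k l]
    have heven : Even (M i j) := by
      rcases CoxeterMatrix.eq_zero_or_eq_two_of_not_reachable h with h0 | h2
      · exact h0 ▸ Even.zero
      · exact h2 ▸ even_two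
    exact cs.ite_simple_mul_ite_simple_pow (fun _ _ => dvd_rfl) (fun _ _ => heven)
      fun _ _ => heven

/-- Capping the level at `n_i - 1` makes this a left inverse of `expandHom` for every `κ`. -/
noncomputable def levelRetraction (hMn : M.IsDoubling n Mn) (κ : ℕ) : Wn →* W :=
  csn.lift ⟨fun p => if (p.2 : ℕ) = min κ (n p.1 - 1) then s p.1 else 1,
    cs.isLiftable_levelRetraction hMn κ⟩

theorem levelRetraction_simple (hMn : M.IsDoubling n Mn) (κ : ℕ) (p : (i : B) × Fin (n i)) :
    cs.levelRetraction csn hMn κ (csn.simple p) =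
      if (p.2 : ℕ) = min κ (n p.1 - 1) then s p.1 else 1 :=
  csn.lift_apply_simple (cs.isLiftable_levelRetraction hMn κ) p

theorem levelRetraction_expandHom (hMn : M.IsDoubling n Mn) (hn : ∀ i : B, 1 ≤ n i) (κ : ℕ)
    (w : W) :
    cs.levelRetraction csn hMn κ (cs.expandHom csn hMn w) = w := by
  suffices (cs.levelRetraction csn hMn κ).comp (cs.expandHom csn hMn) =
      MonoidHom.id W from DFunLike.congr_fun this w
  refine cs.ext_simple fun i => ?_
  have hκ : min κ (n i - 1) < n i := by have := hn i; omega
  rw [MonoidHom.comp_apply, expandHom_simple, wordProd_expandLetter, map_list_prod, map_ofFn]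
  simp only [Function.comp_def, levelRetraction_simple]
  rw [prod_ofFn_eq_of_forall_ne _ ⟨_, hκ⟩ fun k hk => if_neg fun h => hk (Fin.ext h),
    if_pos rfl, MonoidHom.id_apply]

theorem expandHom_injective (hMn : M.IsDoubling n Mn) (hn : ∀ i : B, 1 ≤ n i) :
    Function.Injective (cs.expandHom csn hMn) :=
  Function.LeftInverse.injective (cs.levelRetraction_expandHom csn hMn hn 0)

theorem rightInvSeq_expandWord_cons (hMn : M.IsDoubling n Mn) (i : B) (ω : List B) :
    csn.rightInvSeq (expandWord n (i :: ω)) =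
      ofFn (fun k => (cs.expandHom csn hMn (π ω))⁻¹ * csn.simple ⟨i, k⟩ *
        cs.expandHom csn hMn (π ω)) ++ csn.rightInvSeq (expandWord n ω) := by
  have hcomm : ∀ p ∈ expandLetter n i, ∀ q ∈ expandLetter n i,
      Commute (csn.simple p) (csn.simple q) := by
    intro p hp q hq
    obtain ⟨k, rfl⟩ := mem_ofFn.mp hp
    obtain ⟨l, rfl⟩ := mem_ofFn.mp hq
    by_cases hkl : (k : ℕ) = l
    · rw [Fin.ext hkl]
    · exact commute_simple_of_reachable hMn (.refl i) hkl
  rw [expandWord_cons, rightInvSeq_append, csn.rightInvSeq_eq_map_simple hcomm,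
    expandHom_wordProd, map_map, expandLetter, map_ofFn]
  rfl

theorem levelRetraction_conj_simple (hMn : M.IsDoubling n Mn) (hn : ∀ i : B, 1 ≤ n i) (κ : ℕ)
    (w : W) (i : B) (k : Fin (n i)) :
    cs.levelRetraction csn hMn κ ((cs.expandHom csn hMn w)⁻¹ * csn.simple ⟨i, k⟩ *
      cs.expandHom csn hMn w) = w⁻¹ * (if (k : ℕ) = min κ (n i - 1) then s i else 1) * w := by
  rw [map_mul, map_mul, map_inv, levelRetraction_expandHom _ _ _ hn, levelRetraction_simple]

theorem levelRetraction_mem_rightInvSeq_expandWord (hMn : M.IsDoubling n Mn)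
    (hn : ∀ i : B, 1 ≤ n i) (κ : ℕ) {ω : List B} {t : Wn}
    (ht : t ∈ csn.rightInvSeq (expandWord n ω)) :
    cs.levelRetraction csn hMn κ t = 1 ∨ cs.levelRetraction csn hMn κ t ∈ ris ω := by
  induction ω with
  | nil => simp [expandWord] at ht
  | cons i ω ih =>
    rw [cs.rightInvSeq_expandWord_cons csn hMn, mem_append, mem_ofFn] at ht
    rw [rightInvSeq_cons, mem_cons]
    rcases ht with ⟨k, rfl⟩ | ht
    · rw [cs.levelRetraction_conj_simple csn hMn hn]
      split_ifs
      · exact .inr (.inl rfl)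
      · exact .inl (by simp)
    · exact (ih ht).imp_right .inr

theorem nodup_rightInvSeq_expandWord (hMn : M.IsDoubling n Mn)
    (hn : ∀ i : B, 1 ≤ n i) {ω : List B} (hω : cs.IsReduced ω) :
    (csn.rightInvSeq (expandWord n ω)).Nodup := by
  induction ω with
  | nil => simp [expandWord]
  | cons i ω ih =>
    have hnd := hω.nodup_rightInvSeq
    rw [rightInvSeq_cons, nodup_cons] at hnd
    have hne : (π ω)⁻¹ * s i * π ω ≠ 1 := by
      rw [Ne, mul_assoc, inv_mul_eq_one, eq_comm, mul_eq_right]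
      exact cs.simple_ne_one i
    have hlevel (k : Fin (n i)) : cs.levelRetraction csn hMn k
        ((cs.expandHom csn hMn (π ω))⁻¹ * csn.simple ⟨i, k⟩ * cs.expandHom csn hMn (π ω)) =
          (π ω)⁻¹ * s i * π ω := by
      have := k.isLt
      rw [cs.levelRetraction_conj_simple csn hMn hn, if_pos (by omega)]
    rw [cs.rightInvSeq_expandWord_cons csn hMn, nodup_append]
    refine ⟨nodup_ofFn.mpr fun k l hkl => ?_, ih (hω.drop 1), ?_⟩
    · by_contra hkl'
      have hlk : ¬(l : ℕ) = min (k : ℕ) (n i - 1) := by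
        have := Fin.val_ne_of_ne hkl'
        omega
      have := congrArg (cs.levelRetraction csn hMn k) hkl
      rw [hlevel, cs.levelRetraction_conj_simple csn hMn hn, if_neg hlk, mul_one,
        inv_mul_cancel] at this
      exact hne this
    · rintro _ hx t ht rfl
      obtain ⟨k, rfl⟩ := mem_ofFn.mp hx
      rcases cs.levelRetraction_mem_rightInvSeq_expandWord csn hMn hn k ht with h1 | hmem
      · exact hne ((hlevel k).symm.trans h1)
      · exact hnd.1 ((hlevel k).symm ▸ hmem)

theorem isReduced_expandWord (hMn : M.IsDoubling n Mn) (hn : ∀ i : B, 1 ≤ n i) {ω : List B}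
    (hω : cs.IsReduced ω) : csn.IsReduced (expandWord n ω) :=
  csn.isReduced_of_nodup_rightInvSeq (cs.nodup_rightInvSeq_expandWord csn hMn hn hω)

end CoxeterSystem

/-- Let `W = ⟨S|M⟩` be a finite rank Coxeter system and `n : S → ℕ` with `n_i ≥ 1` and
`n_i = n_j` whenever `C_i = C_j` (same connected component of `Graph'_S(W)`).  Let
`W̃_n = ⟨S_n|M_n⟩` be the Coxeter system with generators `s_{i,k}` (`1 ≤ k ≤ n_i`) and
labels `m_{s_{i,k},s_{j,l}} = m_{i,j}` if `C_i = C_j`, `k = l`; `= 2` if `C_i = C_j`,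
`k ≠ l`; `= m_{i,j}` if `C_i ≠ C_j`.  Then `s_i ↦ s_{i,1}⋯s_{i,n_i}` extends to an
injective group homomorphism `φ_n : W → W̃_n` mapping reduced expressions to reduced
expressions, and `ψ̃_n(φ_n(w)) = Σ_i n_i·#{l : w_l = s_i}` for every reduced expression
`w = w_1⋯w_k`. -/
theorem exists_injective_hom_to_doubled_coxeterSystem
    {B : Type*} [Fintype B] [DecidableEq B] {M : CoxeterMatrix B}
    {W : Type*} [Group W] (cs : CoxeterSystem M W)
    (n : B → ℕ) (hn : ∀ i : B, 1 ≤ n i)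
    (hcomp : ∀ i j : B, (finGraph M).Reachable i j → n i = n j)
    (Mn : CoxeterMatrix ((i : B) × Fin (n i)))
    (hMn : ∀ p q : (i : B) × Fin (n i), p ≠ q →
      Mn p q =
        if (finGraph M).Reachable p.1 q.1 then
          (if (p.2 : ℕ) = (q.2 : ℕ) then M p.1 q.1 else 2)
        else M p.1 q.1)
    {Wn : Type*} [Group Wn] (csn : CoxeterSystem Mn Wn) :
    ∃ φ : W →* Wn,
      (∀ i : B, φ (cs.simple i) =
        csn.wordProd (List.ofFn fun k : Fin (n i) => (⟨i, k⟩ : (i : B) × Fin (n i)))) ∧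
      Function.Injective φ ∧
      (∀ ω : List B, cs.IsReduced ω →
        φ (cs.wordProd ω) = csn.wordProd (expandWord n ω) ∧
        csn.IsReduced (expandWord n ω)) ∧
      (∀ ω : List B, cs.IsReduced ω →
        csn.length (φ (cs.wordProd ω)) = ∑ i : B, n i * ω.count i) := by
  have hdbl : M.IsDoubling n Mn := .of_forall_ne hcomp hMn
  refine ⟨cs.expandHom csn hdbl, cs.expandHom_simple csn hdbl, cs.expandHom_injective csn hdbl hn,
    fun ω hω => ⟨cs.expandHom_wordProd csn hdbl ω, cs.isReduced_expandWord csn hdbl hn hω⟩,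
    fun ω hω => ?_⟩
  rw [cs.expandHom_wordProd csn hdbl, (cs.isReduced_expandWord csn hdbl hn hω).eq,
    length_expandWord]
end

section
/- Let W = ⟨S|M⟩ be a finite rank Coxeter system and let I ⊆ S be such that for each i either C_i ⊆ I or C_i ∩ I = ∅. Then ψ_I is proper (i.e. for every N ∈ ℝ the set {w ∈ W : ψ_I(w) ≤ N} is finite) if and only if the subgroup of W generated by S ∖ I is finite. -/
/-!
Let `H` be the subgroup generated by the simple reflections outside `I`.

If `H` is finite, every `w` with `ψ_I(w) ≤ k` lies in the finite set `(H * S_I)^k * H`, obtained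
by grouping a reduced expression of `w` around its letters from `I`.

Conversely, since every edge of `Graph'_S(W)` between `I` and its complement is missing,
`m_{i,j} ∈ {2, ∞}` for `i ∈ I`, `j ∉ I`, so sending the simple reflections in `I` to `1`
and fixing the others defines an endomorphism `killSimples` of `W`. It fixes `H` pointwise and
maps a word to the word with its letters from `I` deleted; hence a reduced expression of an element of `H`
contains no letter from `I`, that is `H ⊆ {ψ_I ≤ 0}`.
-/

open CoxeterSystem

open Pointwise

theorem Set.Finite.pow {G : Type*} [Monoid G] {s : Set G} (hs : s.Finite) :
    ∀ n : ℕ, (s ^ n).Finite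
  | 0 => by simp
  | n + 1 => by rw [pow_succ]; exact (hs.pow n).mul hs

theorem coe_mul_mul_pow_mul_coe {G S : Type*} [Monoid G] [SetLike S G] [SubmonoidClass S G]
    (H : S) (t : Set G) : ∀ n : ℕ, (H : Set G) * ((H * t) ^ n * H) = (H * t) ^ n * H
  | 0 => by simp [coe_mul_coe]
  | n + 1 => by simp only [pow_succ', ← mul_assoc, coe_mul_coe]

namespace CoxeterSystem

variable {B : Type*} [DecidableEq B] {M : CoxeterMatrix B} {W : Type*} [Group W]
  (cs : CoxeterSystem M W) (I : Finset B)

theorem wordProd_mem_mul_pow_mul (H : Subgroup W) (hH : ∀ i ∉ I, cs.simple i ∈ H) :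
    ∀ ω : List B, cs.wordProd ω ∈
      ((H : Set W) * cs.simple '' I) ^ ω.countP (fun i => decide (i ∈ I)) * H
  | [] => ⟨1, by simp, 1, H.one_mem, by simp⟩
  | i :: ω => by
    obtain ⟨x, hx, h, hh, hxh⟩ := wordProd_mem_mul_pow_mul H hH ω
    rw [wordProd_cons, ← hxh]
    by_cases hi : i ∈ I
    · rw [List.countP_cons_of_pos (by simpa using hi), pow_succ', ← mul_assoc (cs.simple i)]
      refine Set.mul_mem_mul (Set.mul_mem_mul ?_ hx) hh
      simpa using Set.mul_mem_mul H.one_mem (Set.mem_image_of_mem cs.simple hi)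
    · rw [List.countP_cons_of_neg (by simpa using hi), ← coe_mul_mul_pow_mul_coe H]
      exact Set.mul_mem_mul (hH i hi) (Set.mul_mem_mul hx hh)

variable {I} (hI : ∀ i j, (finGraph M).Adj i j → (i ∈ I ↔ j ∈ I))

include hI in
theorem isLiftable_ite_mem :
    M.IsLiftable (fun i => if i ∈ I then (1 : W) else cs.simple i) := by
  have hpow : ∀ i j, i ∈ I → j ∉ I → cs.simple j ^ M i j = 1 := by
    intro i j hi hj
    have hij : i ≠ j := by rintro rfl; exact hj hi
    have hlt : M i j < 3 := not_le.mp fun h => hj ((hI i j ⟨hij, h⟩).mp hi)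
    have hne := M.off_diagonal i j hij
    obtain h | h : M i j = 0 ∨ M i j = 2 := by omega
    all_goals simp [h]
  intro i j
  by_cases hi : i ∈ I <;> by_cases hj : j ∈ I
  · simp [hi, hj]
  · simpa [hi, hj] using hpow i j hi hj
  · simpa [hi, hj, M.symmetric i j] using hpow j i hj hi
  · simp [hi, hj]

def killSimples : W →* W := cs.lift ⟨_, cs.isLiftable_ite_mem hI⟩

@[simp]
theorem killSimples_simple (i : B) :
    cs.killSimples hI (cs.simple i) = if i ∈ I then 1 else cs.simple i :=
  cs.lift_apply_simple _ i

theorem killSimples_wordProd (ω : List B) :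
    cs.killSimples hI (cs.wordProd ω) = cs.wordProd (ω.filter fun i => !decide (i ∈ I)) := by
  induction ω with
  | nil => simp
  | cons i ω ih =>
    by_cases hi : i ∈ I <;> simp [wordProd_cons, ih, hi]

theorem killSimples_eq_self_of_mem_closure {w : W}
    (hw : w ∈ Subgroup.closure (cs.simple '' {i | i ∉ I})) : cs.killSimples hI w = w := by
  induction hw using Subgroup.closure_induction with
  | mem x hx =>
    obtain ⟨i, hi, rfl⟩ := hx
    simp [Set.mem_ofPred_eq.mp hi]
  | one => simp
  | mul x y _ _ hx hy => rw [map_mul, hx, hy]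
  | inv x _ hx => rw [map_inv, hx]

include hI in
theorem countP_eq_zero_of_isReduced_of_mem_closure {ω : List B} (hω : cs.IsReduced ω)
    (hmem : cs.wordProd ω ∈ Subgroup.closure (cs.simple '' {i | i ∉ I})) :
    ω.countP (fun i => decide (i ∈ I)) = 0 := by
  have hlen : ω.length ≤ (ω.filter fun i => !decide (i ∈ I)).length := by
    calc ω.length = cs.length (cs.wordProd ω) := hω.symm
      _ = cs.length (cs.killSimples hI (cs.wordProd ω)) := by
        rw [cs.killSimples_eq_self_of_mem_closure hI hmem]
      _ ≤ _ := by rw [killSimples_wordProd]; exact cs.length_wordProd_le _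
  have hsplit := List.length_eq_countP_add_countP (fun i => decide (i ∈ I)) (l := ω)
  simp only [List.countP_eq_length_filter, decide_not, Bool.decide_eq_true] at hsplit hlen ⊢
  omega

end CoxeterSystem

theorem weighted_length_proper_iff_finite_subgroup_general
    {B : Type*} [DecidableEq B] {M : CoxeterMatrix B}
    {W : Type*} [Group W] (cs : CoxeterSystem M W)
    (I : Finset B)
    (hcomp : ∀ i j : B, (finGraph M).Reachable i j → (i ∈ I ↔ j ∈ I))
    (ψ : W → ℝ)
    (hψ : ∀ ω : List B, cs.IsReduced ω →
      ψ (cs.wordProd ω) = (ω.countP (fun i => decide (i ∈ I)) : ℝ)) :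
    (∀ N : ℝ, {w : W | ψ w ≤ N}.Finite) ↔
      ((Subgroup.closure (cs.simple '' {i : B | i ∉ I}) : Set W)).Finite := by
  set H := Subgroup.closure (cs.simple '' {i : B | i ∉ I})
  have hI : ∀ i j, (finGraph M).Adj i j → (i ∈ I ↔ j ∈ I) := fun i j h => hcomp i j h.reachable
  constructor
  · intro hproper
    refine (hproper 0).subset fun w hw => ?_
    obtain ⟨ω, hω, rfl⟩ := cs.exists_isReduced w
    simp [hψ ω hω, cs.countP_eq_zero_of_isReduced_of_mem_closure hI hω hw]
  · intro hH N
    have hT : ((H : Set W) * cs.simple '' I).Finite := hH.mul (I.finite_toSet.image _)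
    refine ((Set.finite_le_nat ⌊N⌋₊).biUnion fun k _ => (hT.pow k).mul hH).subset fun w hw => ?_
    obtain ⟨ω, hω, rfl⟩ := cs.exists_isReduced w
    have hk : ω.countP (fun i => decide (i ∈ I)) ≤ ⌊N⌋₊ :=
      Nat.le_floor (hψ ω hω ▸ hw : _ ≤ N)
    exact Set.mem_biUnion hk
      (cs.wordProd_mem_mul_pow_mul I H (fun i hi => Subgroup.subset_closure ⟨i, hi, rfl⟩) ω)

/-- Let `W = ⟨S|M⟩` be a finite rank Coxeter system and `I ⊆ S` a union of connected
components of `Graph'_S(W)`.  Let `ψ_I(w)` count the letters of a reduced expression of `w`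
lying in `I`.  Then `ψ_I` is proper (for every `N ∈ ℝ` the set `{w ∈ W : ψ_I(w) ≤ N}` is
finite) if and only if the subgroup of `W` generated by `S ∖ I` is finite. -/
theorem weighted_length_proper_iff_finite_subgroup
    {B : Type*} [Fintype B] [DecidableEq B] {M : CoxeterMatrix B}
    {W : Type*} [Group W] (cs : CoxeterSystem M W)
    (I : Finset B)
    (hcomp : ∀ i j : B, (finGraph M).Reachable i j → (i ∈ I ↔ j ∈ I))
    (ψ : W → ℝ)
    (hψ : ∀ ω : List B, cs.IsReduced ω →
      ψ (cs.wordProd ω) = (ω.countP (fun i => decide (i ∈ I)) : ℝ)) :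
    (∀ N : ℝ, {w : W | ψ w ≤ N}.Finite) ↔
      ((Subgroup.closure (cs.simple '' {i : B | i ∉ I}) : Set W)).Finite :=
  weighted_length_proper_iff_finite_subgroup_general cs I hcomp ψ hψ
end

section
/- Let A be an associative ring and let Δ : A → A be an additive map. For a, b ∈ A define Ψ^{a,b} : A → A by Ψ^{a,b}(x) = Δ(axb) + aΔ(x)b − Δ(ax)b − aΔ(xb). Then for all u_1, u_2, w_1, w_2, v ∈ A: Ψ^{u_1u_2, w_2w_1}(v) = Ψ^{u_1,w_1}(u_2 v w_2) + Ψ^{u_1,w_2}(u_2 v)·w_1 + u_1·Ψ^{u_2,w_1}(v w_2) + u_1·Ψ^{u_2,w_2}(v)·w_1. -/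
/-- Let `A` be an associative ring and `Δ : A → A` an additive map.  With
`Ψ^{a,b}(x) = Δ(axb) + aΔ(x)b − Δ(ax)b − aΔ(xb)`, one has, for all
`u₁, u₂, w₁, w₂, v ∈ A`:
`Ψ^{u₁u₂, w₂w₁}(v) = Ψ^{u₁,w₁}(u₂vw₂) + Ψ^{u₁,w₂}(u₂v)·w₁ + u₁·Ψ^{u₂,w₁}(vw₂) +
u₁·Ψ^{u₂,w₂}(v)·w₁`. -/
theorem Psi_mul_mul
    {A : Type*} [NonUnitalRing A] (Δ : A → A)
    (hΔ : ∀ x y : A, Δ (x + y) = Δ x + Δ y)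
    (Ψ : A → A → A → A)
    (hΨ : ∀ a b x : A, Ψ a b x = Δ (a * x * b) + a * Δ x * b - Δ (a * x) * b - a * Δ (x * b))
    (u₁ u₂ w₁ w₂ v : A) :
    Ψ (u₁ * u₂) (w₂ * w₁) v =
      Ψ u₁ w₁ (u₂ * v * w₂) + Ψ u₁ w₂ (u₂ * v) * w₁ +
        u₁ * Ψ u₂ w₁ (v * w₂) + u₁ * Ψ u₂ w₂ v * w₁ := by
  simp only [hΨ, mul_assoc]
  noncomm_ring
end
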